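/- arXiv:2101.11255 — 11 statements merged into one kernel-verified Lean document; each statement's English description precedes it below -/
import Mathlib

section
/- Suppose s > 1/2 and 0 < r ≤ (2s-1)/(2(1-s)). Then every traveling wave of the gene-drive frequency system with speed c ∈ ℝ is trivial, i.e., its profile P is identically zero on ℝ. -/
/-!
Put `u = N P`. Multiplying the equation for `P` by `N` and adding `P` times the equation for `N`
turns the drift term `2 (N'/N) P'` into the cross term of `(N P)''`, and gives
`u'' + c u' = u (1 - (1 - s) (2 - P) (r (1 - N) + 1))`. Since `0 < N < 1`, the hypothesis on `r`,
i.e. `2 (1 - s) (r + 1) ≤ 1`, makes the bracket at least `min (P / 2) 1 ≥ 0`. Hence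
`(e^{c x} u')' ≥ 0`, and as `u ≥ 0` tends to `0` at `-∞`, this forces `u' ≥ 0`. If `P x > 0`, then
on `[x, ∞)` the monotonicity of `u` and of `P` give `u'' + c u' ≥ u x · min (P x / 2) 1 > 0`,
so `u' + c u`, then `u'`, then `u` tend to `+∞`, contradicting `0 ≤ u ≤ P`.
-/

open Set Filter Topology Real

theorem tendsto_atTop_of_eventually_le_deriv {f : ℝ → ℝ} {m : ℝ} (hf : Differentiable ℝ f)
    (hm : 0 < m) (h : ∀ᶠ x in atTop, m ≤ deriv f x) : Tendsto f atTop atTop := by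
  obtain ⟨a, ha⟩ := eventually_atTop.1 h
  have hgrow : ∀ y ≥ a, f a + m * (y - a) ≤ f y := fun y hy => by
    have := (convex_Ici a).mul_sub_le_image_sub_of_le_deriv hf.continuous.continuousOn
      hf.differentiableOn (fun x hx => ha x (interior_subset hx)) a self_mem_Ici y hy hy
    linarith
  refine tendsto_atTop_mono' _ (eventually_atTop.2 ⟨a, hgrow⟩) ?_
  exact tendsto_atTop_add_const_left _ _
    ((tendsto_atTop_add_const_right _ (-a) tendsto_id).const_mul_atTop hm)

theorem not_eventually_le_deriv_deriv_add_mul_deriv {u : ℝ → ℝ} {c m : ℝ} (hu : ContDiff ℝ 2 u)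
    (hbdd : Bornology.IsBounded (range u)) (hm : 0 < m) :
    ¬ ∀ᶠ x in atTop, m ≤ deriv (deriv u) x + c * deriv u x := by
  intro h
  obtain ⟨C, hC⟩ := hbdd.exists_norm_le
  have hu1 : Differentiable ℝ u := hu.differentiable two_ne_zero
  have hu2 : Differentiable ℝ (deriv u) := hu.differentiable_deriv_two
  have hg : Tendsto (fun x => deriv u x + c * u x) atTop atTop := by
    refine tendsto_atTop_of_eventually_le_deriv (hu2.add (hu1.const_mul c)) hm ?_
    filter_upwards [h] with x hx
    rwa [deriv_fun_add (hu2 x) ((hu1 x).const_mul c), deriv_const_mul c (hu1 x)]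
  have hcu : ∀ x, -(|c| * C) ≤ -(c * u x) := fun x => by
    have := hC _ (mem_range_self x)
    rw [Real.norm_eq_abs] at this
    nlinarith [le_abs_self (c * u x), abs_mul c (u x), abs_nonneg c]
  have hu' : Tendsto (deriv u) atTop atTop := by
    simpa using tendsto_atTop_add_left_of_le' atTop _ (Eventually.of_forall hcu) hg
  exact not_bddAbove_of_tendsto_atTop
    (tendsto_atTop_of_eventually_le_deriv hu1 one_pos (hu'.eventually_ge_atTop 1)) hbdd.bddAbove

theorem monotone_of_deriv_deriv_add_mul_deriv_nonneg {u : ℝ → ℝ} {c : ℝ} (hu : ContDiff ℝ 2 u)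
    (hu0 : ∀ x, 0 ≤ u x) (hlim : Tendsto u atBot (𝓝 0))
    (h : ∀ x, 0 ≤ deriv (deriv u) x + c * deriv u x) : Monotone u := by
  have hu1 : Differentiable ℝ u := hu.differentiable two_ne_zero
  have hu2 : Differentiable ℝ (deriv u) := hu.differentiable_deriv_two
  have hφ : Monotone fun x => exp (c * x) * deriv u x := by
    refine monotone_of_deriv_nonneg (by fun_prop) fun x => ?_
    have hd : HasDerivAt (fun x => exp (c * x) * deriv u x)
        (exp (c * x) * (deriv (deriv u) x + c * deriv u x)) x :=
      (((hasDerivAt_id' x).const_mul c).exp.fun_mul (hu2 x).hasDerivAt).congr_deriv (by ring)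
    rw [hd.deriv]
    exact mul_nonneg (exp_pos _).le (h x)
  refine monotone_of_deriv_nonneg hu1 fun a => not_lt.1 fun ha => ?_
  have hanti : StrictAntiOn u (Iic a) := by
    refine strictAntiOn_of_deriv_neg (convex_Iic a) hu1.continuous.continuousOn fun x hx => ?_
    rw [interior_Iic] at hx
    exact neg_of_mul_neg_right ((hφ hx.le).trans_lt (mul_neg_of_pos_of_neg (exp_pos _) ha))
      (exp_pos _).le
  have hle : u (a - 1) ≤ 0 := by
    refine ge_of_tendsto hlim ?_
    filter_upwards [eventually_le_atBot (a - 1)] with z hz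
    exact hanti.antitoneOn (mem_Iic.2 (by linarith)) (mem_Iic.2 (by linarith)) hz
  linarith [hanti (mem_Iic.2 (by linarith)) (le_refl a) (sub_one_lt a), hu0 a]

theorem min_half_one_le_one_sub_mul {a ρ p : ℝ} (ha : 0 ≤ a) (hρ : 0 ≤ ρ)
    (haρ : 2 * a * ρ ≤ 1) : min (p / 2) 1 ≤ 1 - a * (2 - p) * ρ := by
  rcases le_or_gt p 2 with hp | hp
  · nlinarith [min_le_left (p / 2) 1, mul_nonneg (mul_nonneg ha hρ) (sub_nonneg.2 hp)]
  · nlinarith [min_le_right (p / 2) 1, mul_nonneg (mul_nonneg ha hρ) (sub_nonneg.2 hp.le)]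

theorem deriv_deriv_mul {f g : ℝ → ℝ} (hf : ContDiff ℝ 2 f) (hg : ContDiff ℝ 2 g) (x : ℝ) :
    deriv (deriv fun y => f y * g y) x
      = deriv (deriv f) x * g x + 2 * (deriv f x * deriv g x) + f x * deriv (deriv g) x := by
  have hf1 : Differentiable ℝ f := hf.differentiable two_ne_zero
  have hg1 : Differentiable ℝ g := hg.differentiable two_ne_zero
  have hf2 : Differentiable ℝ (deriv f) := hf.differentiable_deriv_two
  have hg2 : Differentiable ℝ (deriv g) := hg.differentiable_deriv_two
  have hd : deriv (fun y => f y * g y) = fun y => deriv f y * g y + f y * deriv g y :=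
    funext fun y => deriv_fun_mul (hf1 y) (hg1 y)
  rw [hd, deriv_fun_add (f := fun y => deriv f y * g y) (g := fun y => f y * deriv g y)
    ((hf2 x).mul (hg1 x)) ((hf1 x).mul (hg2 x)),
    deriv_fun_mul (hf2 x) (hg1 x), deriv_fun_mul (hf1 x) (hg2 x)]
  ring

theorem deriv_deriv_add_mul_deriv_wave_product {s r c : ℝ} {P N : ℝ → ℝ}
    (hP : ContDiff ℝ 2 P) (hN : ContDiff ℝ 2 N) {x : ℝ} (hNx : N x ≠ 0)
    (heqP : -deriv (deriv P) x - c * deriv P x - 2 * (deriv N x / N x) * deriv P x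
      = (r * (1 - N x) + 1) * P x * (1 - P x) * (s * P x - (2 * s - 1)))
    (heqN : -deriv (deriv N) x - c * deriv N x
      = N x * ((1 - s + s * (1 - P x) ^ 2) * (r * (1 - N x) + 1) - 1)) :
    deriv (deriv fun y => N y * P y) x + c * deriv (fun y => N y * P y) x
      = N x * P x * (1 - (1 - s) * (2 - P x) * (r * (1 - N x) + 1)) := by
  rw [deriv_deriv_mul hN hP, deriv_fun_mul ((hN.differentiable two_ne_zero) x)
    ((hP.differentiable two_ne_zero) x)]
  field_simp at heqP
  linear_combination (-P x) * heqN - heqP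

theorem stmt0_general
    (s r c : ℝ) (hs : s ∈ Set.Ico (0 : ℝ) 1) (hr : 0 < r)
    (hr' : r ≤ (2 * s - 1) / (2 * (1 - s)))
    (P N : ℝ → ℝ)
    (hP2 : ContDiff ℝ 2 P) (hN2 : ContDiff ℝ 2 N)
    (hNpos : ∀ x, 0 < N x)
    (hPbd : Bornology.IsBounded (Set.range P))
    (hPnn : ∀ x, 0 ≤ P x)
    (hPmono : Monotone P) (hNanti : StrictAnti N)
    (hPlim : Filter.Tendsto P Filter.atBot (nhds 0))
    (hNlim : Filter.Tendsto N Filter.atBot (nhds 1))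
    (heqP : ∀ x, -deriv (deriv P) x - c * deriv P x - 2 * (deriv N x / N x) * deriv P x
      = (r * (1 - N x) + 1) * P x * (1 - P x) * (s * P x - (2 * s - 1)))
    (heqN : ∀ x, -deriv (deriv N) x - c * deriv N x
      = N x * ((1 - s + s * (1 - P x) ^ 2) * (r * (1 - N x) + 1) - 1)) :
    ∀ x, P x = 0 := by
  have hs1 : 0 < 1 - s := sub_pos.2 hs.2
  have hcond : 2 * (1 - s) * (r + 1) ≤ 1 := by
    have := (le_div_iff₀ (by positivity)).1 hr'
    nlinarith
  have hNle : ∀ x, N x ≤ 1 := hNanti.antitone.ge_of_tendsto hNlim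
  have hNlt : ∀ x, N x < 1 := fun x => (hNanti (sub_one_lt x)).trans_le (hNle _)
  have hu0 : ∀ x, 0 ≤ N x * P x := fun x => mul_nonneg (hNpos x).le (hPnn x)
  have huP : ∀ x, N x * P x ≤ P x := fun x => mul_le_of_le_one_left (hPnn x) (hNle x)
  have hbracket : ∀ x, min (P x / 2) 1 ≤ 1 - (1 - s) * (2 - P x) * (r * (1 - N x) + 1) :=
    fun x => min_half_one_le_one_sub_mul hs1.le (by nlinarith [hNlt x])
      (by nlinarith [mul_pos hr (hNpos x)])
  have hkey := fun x =>
    deriv_deriv_add_mul_deriv_wave_product hP2 hN2 (hNpos x).ne' (heqP x) (heqN x)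
  have humono : Monotone fun x => N x * P x :=
    monotone_of_deriv_deriv_add_mul_deriv_nonneg (hN2.mul hP2) hu0
      (tendsto_of_tendsto_of_tendsto_of_le_of_le tendsto_const_nhds hPlim hu0 huP) fun x => by
        rw [hkey x]
        exact mul_nonneg (hu0 x) ((le_min (by linarith [hPnn x]) zero_le_one).trans (hbracket x))
  intro x
  by_contra hPx
  have hPx : 0 < P x := (hPnn x).lt_of_ne' hPx
  obtain ⟨C, hC⟩ := hPbd.bddAbove
  refine not_eventually_le_deriv_deriv_add_mul_deriv (c := c) (m := N x * P x * min (P x / 2) 1) (hN2.mul hP2)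
    ((Metric.isBounded_Icc 0 C).subset ?_) (mul_pos (mul_pos (hNpos x) hPx) (by positivity)) ?_
  · rintro _ ⟨y, rfl⟩
    exact ⟨hu0 y, (huP y).trans (hC (mem_range_self y))⟩
  · filter_upwards [eventually_ge_atTop x] with y hy
    rw [hkey y]
    exact mul_le_mul (humono hy) ((min_le_min_right _ (by linarith [hPmono hy])).trans (hbracket y))
      (by positivity) (hu0 y)

/-- If `s > 1/2` and `0 < r ≤ (2s-1)/(2(1-s))`, then every traveling wave
of the gene-drive frequency system with speed `c` is trivial, i.e. `P ≡ 0`. -/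
theorem stmt0
    (s r c : ℝ) (hs : s ∈ Set.Ico (0 : ℝ) 1) (hr : 0 < r)
    (hs' : 1 / 2 < s) (hr' : r ≤ (2 * s - 1) / (2 * (1 - s)))
    (P N : ℝ → ℝ)
    (hP2 : ContDiff ℝ 2 P) (hN2 : ContDiff ℝ 2 N)
    (hNpos : ∀ x, 0 < N x)
    (hPbd : Bornology.IsBounded (Set.range P))
    (hNbd : Bornology.IsBounded (Set.range N))
    (hPnn : ∀ x, 0 ≤ P x)
    (hPmono : Monotone P) (hNanti : StrictAnti N)
    (hPlim : Filter.Tendsto P Filter.atBot (nhds 0))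
    (hNlim : Filter.Tendsto N Filter.atBot (nhds 1))
    (heqP : ∀ x, -deriv (deriv P) x - c * deriv P x - 2 * (deriv N x / N x) * deriv P x
      = (r * (1 - N x) + 1) * P x * (1 - P x) * (s * P x - (2 * s - 1)))
    (heqN : ∀ x, -deriv (deriv N) x - c * deriv N x
      = N x * ((1 - s + s * (1 - P x) ^ 2) * (r * (1 - N x) + 1) - 1)) :
    ∀ x, P x = 0 :=
  stmt0_general s r c hs hr hr' P N hP2 hN2 hNpos hPbd hPnn hPmono hNanti hPlim hNlim heqP heqN
end

section
/- Let s ∈ (1/2, 1) and 0 < r ≤ (2s-1)/(2(1-s)). Let (n_D, n_O) be a classical solution of the gene-drive reaction–diffusion system on (0,∞) × ℝ such that n_D is bounded and the per-capita birth rate stays nonnegative, i.e., n_D(t,x) + n_O(t,x) ≤ 1 + 1/r for all (t,x). Then n_D goes extinct spatially uniformly: sup_{x ∈ ℝ} n_D(t,x) → 0 as t → +∞. -/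
/-!
On the parameter range, the per-capita growth rate of the drive is at most `-c n_D` with
`c = r / (2 (r + 1))`, so `n_D` is a subsolution of `u_t - u_xx = -c u²`. The spatially constant
solution `M / (1 + c M t)` of this equation, started above `sup n_D`, dominates `n_D` by the
parabolic maximum principle, and it tends to `0`.
-/

open Set Filter Topology

theorem drive_growth_rate_le {s r a b : ℝ} (hs1 : s < 1) (hr : 0 < r)
    (hr' : r ≤ (2 * s - 1) / (2 * (1 - s))) (ha : 0 ≤ a) (hb : 0 < b)
    (hab : a + b ≤ 1 + 1 / r) :
    (1 - s) * (1 + b / (a + b)) * (r * (1 - a - b) + 1) - 1 ≤ -(r / (2 * (r + 1))) * a := by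
  -- the rate is at most `(1 - s) (r + 1) (2 - q) - 1 ≤ -q / 2`, where `q = a / (a + b)`
  -- is at least `r a / (r + 1)` because `a + b ≤ (r + 1) / r`
  have hN : 0 < a + b := by linarith
  have hcost : (1 - s) * (r + 1) ≤ 1 / 2 := by
    rw [le_div_iff₀ (by linarith)] at hr'
    linarith
  have hrab : r * (a + b) ≤ r + 1 := by
    calc r * (a + b) ≤ r * (1 + 1 / r) := by gcongr
      _ = r + 1 := by field_simp
  have hfrac : 1 + b / (a + b) = 2 - a / (a + b) := by field_simp; ring
  set q := a / (a + b)
  have hq1 : q ≤ 1 := (div_le_one hN).mpr (by linarith)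
  have hqa : r / (r + 1) * a ≤ q := by
    rw [div_mul_eq_mul_div, div_le_div_iff₀ (by linarith) hN]
    nlinarith
  have hbirth : r * (1 - a - b) + 1 ≤ r + 1 := by nlinarith
  rw [hfrac]
  calc (1 - s) * (2 - q) * (r * (1 - a - b) + 1) - 1
      ≤ (1 - s) * (r + 1) * (2 - q) - 1 := by
        linarith [mul_le_mul_of_nonneg_left hbirth (by nlinarith : 0 ≤ (1 - s) * (2 - q))]
    _ ≤ 1 / 2 * (2 - q) - 1 := by gcongr; linarith
    _ = -(1 / 2) * q := by ring
    _ ≤ -(1 / 2) * (r / (r + 1) * a) := by linarith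
    _ = -(r / (2 * (r + 1))) * a := by field_simp

theorem IsLocalMax.nonpos_of_hasDerivAt_of_hasDerivAt {f f' : ℝ → ℝ} {f'' x₀ : ℝ}
    (h : IsLocalMax f x₀) (hf : ∀ᶠ x in 𝓝 x₀, HasDerivAt f (f' x) x)
    (hf' : HasDerivAt f' f'' x₀) : f'' ≤ 0 := by
  have hderiv : deriv f =ᶠ[𝓝 x₀] f' := hf.mono fun x hx => hx.deriv
  by_contra! hpos
  have hmin : IsLocalMin f x₀ :=
    isLocalMin_of_deriv_deriv_pos (by rwa [hderiv.deriv_eq, hf'.deriv])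
      h.deriv_eq_zero hf.self_of_nhds.continuousAt
  have hconst : f =ᶠ[𝓝 x₀] fun _ => f x₀ :=
    (h.and hmin).mono fun x hx => le_antisymm hx.1 hx.2
  have hflat : f' =ᶠ[𝓝 x₀] fun _ => 0 := by
    filter_upwards [hconst.eventuallyEq_nhds, hderiv] with x hx hx'
    rw [← hx', hx.deriv_eq, deriv_const]
  rw [hf'.unique (hflat.hasDerivAt_iff.mpr (hasDerivAt_const x₀ 0))] at hpos
  exact lt_irrefl 0 hpos

theorem HasDerivAt.nonneg_of_isMaxOn_Icc {f : ℝ → ℝ} {f' a b : ℝ} (hf : HasDerivAt f f' b)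
    (hab : a < b) (hmax : IsMaxOn f (Icc a b) b) : 0 ≤ f' := by
  have hcone : a - b ∈ posTangentConeAt (Icc a b) b :=
    sub_mem_posTangentConeAt_of_segment_subset (segment_eq_Icc' b a ▸ by simp [hab.le])
  have := hmax.localize.hasFDerivWithinAt_nonpos hf.hasFDerivAt.hasFDerivWithinAt hcone
  simp only [ContinuousLinearMap.toSpanSingleton_apply, smul_eq_mul] at this
  nlinarith

theorem exists_isMaxOn_sub_mul_sq {f : ℝ × ℝ → ℝ} {I : Set ℝ} {K ε : ℝ} (hI : IsCompact I)
    (hne : I.Nonempty) (hε : 0 < ε) (hf : ContinuousOn f (I ×ˢ univ))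
    (hK : ∀ q ∈ I ×ˢ univ, f q ≤ K) :
    ∃ p ∈ I ×ˢ univ, IsMaxOn (fun q => f q - ε * q.2 ^ 2) (I ×ˢ univ) p := by
  obtain ⟨t, ht⟩ := hne
  have hS : (t, (0 : ℝ)) ∈ I ×ˢ univ := ⟨ht, trivial⟩
  refine (hf.sub (by fun_prop)).exists_isMaxOn' (hI.isClosed.prod isClosed_univ) hS ?_
  set R := max 1 ((K - f (t, 0)) / ε)
  have hR : K - f (t, 0) ≤ ε * R := by
    rw [← div_le_iff₀' hε]
    exact le_max_right _ _
  filter_upwards [mem_inf_of_left (hI.prod (isCompact_Icc (a := -R) (b := R))).compl_mem_cocompact,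
    mem_inf_of_right (mem_principal_self _)] with q hqK hqS
  have hRq : R < |q.2| := by
    by_contra! h
    exact hqK ⟨hqS.1, abs_le.mp h⟩
  have hR1 : 1 ≤ R := le_max_left _ _
  have : R ≤ q.2 ^ 2 := by nlinarith [sq_abs q.2]
  show f q - ε * q.2 ^ 2 ≤ f (t, 0) - ε * (0 : ℝ) ^ 2
  nlinarith [hK q hqS]

theorem hasDerivAt_div_one_add_mul {c M t : ℝ} (h : 1 + c * M * t ≠ 0) :
    HasDerivAt (fun t => M / (1 + c * M * t)) (-c * (M / (1 + c * M * t)) ^ 2) t := by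
  have hlin : HasDerivAt (fun t => 1 + c * M * t) (c * M) t := by
    simpa using ((hasDerivAt_id t).const_mul (c * M)).const_add 1
  exact ((hasDerivAt_const t M).div hlin h).congr_deriv (by rw [div_pow]; ring)

theorem heat_subsolution_sub_le_penalty {u : ℝ → ℝ → ℝ} {ψ ψ' : ℝ → ℝ} {K : ℝ}
    (hu : ContinuousOn (fun q : ℝ × ℝ => u q.1 q.2) (Ici 0 ×ˢ univ))
    (hut : ∀ x, ContDiffOn ℝ 1 (fun t => u t x) (Ioi 0))
    (hux : ∀ t > 0, ContDiff ℝ 2 (u t))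
    (hψ : ∀ t ≥ 0, HasDerivAt ψ (ψ' t) t)
    (hbdd : ∀ t ≥ 0, ∀ x, u t x - ψ t ≤ K)
    (hinit : ∀ x, u 0 x ≤ ψ 0)
    (hsub : ∀ t > 0, ∀ x, ψ t < u t x →
      deriv (fun τ => u τ x) t - deriv (deriv (u t)) x ≤ ψ' t) :
    ∀ ε > 0, ∀ T ≥ 0, ∀ x, u T x - ψ T ≤ ε * (x ^ 2 + 3 * T) := by
  intro ε hε T hT x₁
  by_contra! hpos
  -- at a positive maximum of `u - ψ - ε (x² + 3 t)`, the `3 ε` lost in time outweighs the `2 ε`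
  -- gained in `u_xx`, contradicting `hsub`
  have hIcc : Icc 0 T ×ˢ univ ⊆ (Ici 0 ×ˢ univ : Set (ℝ × ℝ)) :=
    prod_mono Icc_subset_Ici_self le_rfl
  have hψc : ContinuousOn (fun q : ℝ × ℝ => ψ q.1) (Icc 0 T ×ˢ univ) :=
    fun q hq => (hψ q.1 hq.1.1).continuousAt.comp_continuousWithinAt continuousWithinAt_fst
  obtain ⟨⟨t₀, x₀⟩, ⟨ht₀, -⟩, hmax⟩ := exists_isMaxOn_sub_mul_sq (K := K) isCompact_Icc
    (nonempty_Icc.2 hT) hε (f := fun q => u q.1 q.2 - ψ q.1 - 3 * ε * q.1)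
    (((hu.mono hIcc).sub hψc).sub (by fun_prop))
    (fun q hq => by nlinarith [hbdd q.1 hq.1.1 q.2, hq.1.1])
  rw [isMaxOn_iff] at hmax
  have hθ₀ : 0 < u t₀ x₀ - ψ t₀ - 3 * ε * t₀ - ε * x₀ ^ 2 := by
    nlinarith [hmax (T, x₁) ⟨⟨hT, le_rfl⟩, trivial⟩]
  have ht₀pos : 0 < t₀ := by
    refine ht₀.1.lt_of_ne fun h => ?_
    subst h
    nlinarith [hinit x₀]
  have hspace : deriv (deriv (u t₀)) x₀ - 2 * ε ≤ 0 := by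
    have hC2 := hux t₀ ht₀pos
    refine IsLocalMax.nonpos_of_hasDerivAt_of_hasDerivAt
      (f := fun x => u t₀ x - ψ t₀ - 3 * ε * t₀ - ε * x ^ 2)
      (f' := fun x => deriv (u t₀) x - 2 * ε * x)
      (Eventually.of_forall fun x => hmax (t₀, x) ⟨ht₀, trivial⟩)
      (Eventually.of_forall fun x => ?_) ?_
    · exact ((((hC2.differentiable two_ne_zero x).hasDerivAt.sub_const _).sub_const _).sub
        ((hasDerivAt_pow 2 x).const_mul ε)).congr_deriv (by ring)
    · exact ((hC2.differentiable_deriv_two x₀).hasDerivAt.sub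
        ((hasDerivAt_id x₀).const_mul (2 * ε))).congr_deriv (by ring)
  have htime : 0 ≤ deriv (fun τ => u τ x₀) t₀ - ψ' t₀ - 3 * ε := by
    have hdiff : DifferentiableAt ℝ (fun τ => u τ x₀) t₀ :=
      ((hut x₀).differentiableOn one_ne_zero t₀ ht₀pos).differentiableAt (Ioi_mem_nhds ht₀pos)
    refine HasDerivAt.nonneg_of_isMaxOn_Icc (f := fun t => u t x₀ - ψ t - 3 * ε * t - ε * x₀ ^ 2)
      (a := 0) ?_ ht₀pos fun t ht => hmax (t, x₀) ⟨⟨ht.1, ht.2.trans ht₀.2⟩, trivial⟩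
    exact (((hdiff.hasDerivAt.sub (hψ t₀ ht₀.1)).sub
      ((hasDerivAt_id t₀).const_mul (3 * ε))).sub_const _).congr_deriv (by ring)
  have := hsub t₀ ht₀pos x₀ (by nlinarith)
  linarith

theorem heat_subsolution_le {u : ℝ → ℝ → ℝ} {ψ ψ' : ℝ → ℝ} {K : ℝ}
    (hu : ContinuousOn (fun q : ℝ × ℝ => u q.1 q.2) (Ici 0 ×ˢ univ))
    (hut : ∀ x, ContDiffOn ℝ 1 (fun t => u t x) (Ioi 0))
    (hux : ∀ t > 0, ContDiff ℝ 2 (u t))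
    (hψ : ∀ t ≥ 0, HasDerivAt ψ (ψ' t) t)
    (hbdd : ∀ t ≥ 0, ∀ x, u t x - ψ t ≤ K)
    (hinit : ∀ x, u 0 x ≤ ψ 0)
    (hsub : ∀ t > 0, ∀ x, ψ t < u t x →
      deriv (fun τ => u τ x) t - deriv (deriv (u t)) x ≤ ψ' t) :
    ∀ t ≥ 0, ∀ x, u t x ≤ ψ t := by
  intro T hT x
  have hlim : Tendsto (fun ε => ψ T + ε * (x ^ 2 + 3 * T)) (𝓝[>] 0) (𝓝 (ψ T)) := by
    have : Continuous fun ε => ψ T + ε * (x ^ 2 + 3 * T) := by fun_prop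
    simpa using (this.tendsto 0).mono_left nhdsWithin_le_nhds
  refine ge_of_tendsto hlim (eventually_nhdsWithin_of_forall fun ε hε => ?_)
  linarith [heat_subsolution_sub_le_penalty hu hut hux hψ hbdd hinit hsub ε hε T hT x]

theorem stmt2_general
    (s r : ℝ) (hs1 : s < 1)
    (hr : 0 < r) (hr' : r ≤ (2 * s - 1) / (2 * (1 - s)))
    (nD nO : ℝ → ℝ → ℝ)
    (hDcont : ContinuousOn (fun q : ℝ × ℝ => nD q.1 q.2) (Set.Ici 0 ×ˢ Set.univ))
    (hDt : ∀ x : ℝ, ContDiffOn ℝ 1 (fun t => nD t x) (Set.Ioi 0))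
    (hDx : ∀ t > (0 : ℝ), ContDiff ℝ 2 (fun x => nD t x))
    (hDnn : ∀ t ≥ (0 : ℝ), ∀ x, 0 ≤ nD t x)
    (hOpos : ∀ t ≥ (0 : ℝ), ∀ x, 0 < nO t x)
    (hDbd : ∃ M : ℝ, ∀ t ≥ (0 : ℝ), ∀ x, nD t x ≤ M)
    (hbirth : ∀ t ≥ (0 : ℝ), ∀ x, nD t x + nO t x ≤ 1 + 1 / r)
    (heqD : ∀ t > (0 : ℝ), ∀ x,
      deriv (fun τ => nD τ x) t - deriv (deriv (fun y => nD t y)) x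
        = nD t x * ((1 - s) * (1 + nO t x / (nD t x + nO t x))
            * (r * (1 - nD t x - nO t x) + 1) - 1)) :
    Filter.Tendsto (fun t : ℝ => ⨆ x : ℝ, nD t x) Filter.atTop (nhds 0) := by
  obtain ⟨M₀, hM₀⟩ := hDbd
  set M := max M₀ 1
  set c := r / (2 * (r + 1))
  have hden : ∀ t ≥ 0, 0 < 1 + c * M * t := fun t ht => by positivity
  have hψ : ∀ t ≥ 0, 0 < M / (1 + c * M * t) := fun t ht => div_pos (by positivity) (hden t ht)
  have hbound : ∀ t ≥ 0, ∀ x, nD t x ≤ M / (1 + c * M * t) := by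
    refine heat_subsolution_le hDcont hDt hDx (K := M)
      (fun t ht => hasDerivAt_div_one_add_mul (hden t ht).ne')
      (fun t ht x => by linarith [hM₀ t ht x, le_max_left M₀ 1, hψ t ht]) (fun x => by
        rw [mul_zero, add_zero, div_one]; exact (hM₀ 0 le_rfl x).trans (le_max_left M₀ 1))
      fun t ht x hlt => ?_
    have hrate :=
      drive_growth_rate_le hs1 hr hr' (hDnn t ht.le x) (hOpos t ht.le x) (hbirth t ht.le x)
    calc _ = _ := heqD t ht x
      _ ≤ nD t x * (-c * nD t x) := mul_le_mul_of_nonneg_left hrate (hDnn t ht.le x)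
      _ ≤ -c * (M / (1 + c * M * t)) ^ 2 := by
        have hsq := pow_le_pow_left₀ (hψ t ht.le).le hlt.le 2
        nlinarith [mul_le_mul_of_nonneg_left hsq (by positivity : 0 ≤ c)]
  have hψ0 : Tendsto (fun t => M / (1 + c * M * t)) atTop (𝓝 0) :=
    tendsto_const_nhds.div_atTop
      (tendsto_atTop_add_const_left _ 1 (tendsto_id.const_mul_atTop (by positivity)))
  refine squeeze_zero' (eventually_atTop.2 ⟨0, fun t ht => ?_⟩)
    (eventually_atTop.2 ⟨0, fun t ht => ciSup_le (hbound t ht)⟩) hψ0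
  exact (hDnn t ht 0).trans (le_ciSup ⟨M₀, forall_mem_range.2 (hM₀ t ht)⟩ 0)

/-- If `s ∈ (1/2, 1)` and `0 < r ≤ (2s-1)/(2(1-s))`, then for any bounded
classical solution of the gene-drive reaction–diffusion system on `(0,∞) × ℝ` whose
per-capita birth rate stays nonnegative (`n_D + n_O ≤ 1 + 1/r`), the drive density
`n_D` goes extinct spatially uniformly: `sup_x n_D(t,x) → 0` as `t → +∞`. -/
theorem stmt2
    (s r : ℝ) (hs : 1 / 2 < s) (hs1 : s < 1)
    (hr : 0 < r) (hr' : r ≤ (2 * s - 1) / (2 * (1 - s)))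
    (nD nO : ℝ → ℝ → ℝ)
    (hDcont : ContinuousOn (fun q : ℝ × ℝ => nD q.1 q.2) (Set.Ici 0 ×ˢ Set.univ))
    (hOcont : ContinuousOn (fun q : ℝ × ℝ => nO q.1 q.2) (Set.Ici 0 ×ˢ Set.univ))
    (hDt : ∀ x : ℝ, ContDiffOn ℝ 1 (fun t => nD t x) (Set.Ioi 0))
    (hOt : ∀ x : ℝ, ContDiffOn ℝ 1 (fun t => nO t x) (Set.Ioi 0))
    (hDx : ∀ t > (0 : ℝ), ContDiff ℝ 2 (fun x => nD t x))
    (hOx : ∀ t > (0 : ℝ), ContDiff ℝ 2 (fun x => nO t x))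
    (hDnn : ∀ t ≥ (0 : ℝ), ∀ x, 0 ≤ nD t x)
    (hOpos : ∀ t ≥ (0 : ℝ), ∀ x, 0 < nO t x)
    (hDbd : ∃ M : ℝ, ∀ t ≥ (0 : ℝ), ∀ x, nD t x ≤ M)
    (hbirth : ∀ t ≥ (0 : ℝ), ∀ x, nD t x + nO t x ≤ 1 + 1 / r)
    (heqD : ∀ t > (0 : ℝ), ∀ x,
      deriv (fun τ => nD τ x) t - deriv (deriv (fun y => nD t y)) x
        = nD t x * ((1 - s) * (1 + nO t x / (nD t x + nO t x))
            * (r * (1 - nD t x - nO t x) + 1) - 1))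
    (heqO : ∀ t > (0 : ℝ), ∀ x,
      deriv (fun τ => nO τ x) t - deriv (deriv (fun y => nO t y)) x
        = nO t x * ((nO t x / (nD t x + nO t x))
            * (r * (1 - nD t x - nO t x) + 1) - 1)) :
    Filter.Tendsto (fun t : ℝ => ⨆ x : ℝ, nD t x) Filter.atTop (nhds 0) :=
  stmt2_general s r hs1 hr hr' nD nO hDcont hDt hDx hDnn hOpos hDbd hbirth heqD
end

section
/- Let s ∈ [0,1) and r > (2s-1)/(2(1-s)) with r > 0. Let (n_D, n_O) be a classical solution of the gene-drive reaction–diffusion system on (0,∞) × ℝ such that n_D is bounded, n_D(0,·) is compactly supported, and the per-capita birth rate stays nonnegative, i.e., n_D(t,x) + n_O(t,x) ≤ 1 + 1/r for all (t,x). Then n_D spreads at most at speed 2√(2(1-s)(r+1) - 1): for every c' > 2√(2(1-s)(r+1) - 1), sup_{|x| ≥ c'·t} n_D(t,x) → 0 as t → +∞. -/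
/-!
The per-capita growth rate of `n_D` is at most `L = 2(1-s)(r+1) - 1`, because the
birth factor `r(1 - n_D - n_O) + 1` lies in `[0, r + 1]` and `n_O/(n_D + n_O) ≤ 1`. Hence
`n_D` is a subsolution of `∂ₜu - ∂ₓₓu = L u`, and by the comparison principle it lies below
the exponential supersolutions `M exp((q² + L) t ± q x + q R)`, where `R` bounds the initial
support. With `q = c'/2`, on `|x| ≥ c' t` these are at most `M exp(q R + (L - c'²/4) t)`,
which tends to `0` since `c' > 2√L`. The comparison principle is the weak maximum principle
for bounded functions on `[0, ∞) × ℝ`, proved by penalizing with `ε (x² + 2t)` and damping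
with `exp (-μ t)`.
-/

open Set Filter Real Topology Function

theorem IsLocalMax.deriv_deriv_nonpos {f : ℝ → ℝ} {a : ℝ} (h : IsLocalMax f a)
    (hc : ContinuousAt f a) : deriv (deriv f) a ≤ 0 := by
  by_contra! hpos
  have hmin := isLocalMin_of_deriv_deriv_pos hpos h.deriv_eq_zero hc
  have hconst : f =ᶠ[𝓝 a] fun _ => f a := (h.and hmin).mono fun x hx => le_antisymm hx.1 hx.2
  have hderiv : deriv f =ᶠ[𝓝 a] fun _ => 0 :=
    hconst.eventuallyEq_nhds.mono fun x hx => by rw [hx.deriv_eq, deriv_const]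
  simp [hderiv.deriv_eq] at hpos

theorem IsMaxOn.deriv_nonneg_of_right_endpoint {g : ℝ → ℝ} {a b : ℝ} (hab : a < b)
    (hmax : IsMaxOn g (Icc a b) b) (hg : DifferentiableAt ℝ g b) : 0 ≤ deriv g b := by
  have hslope :=
    hasDerivWithinAt_iff_tendsto_slope.mp (hg.hasDerivAt.hasDerivWithinAt (s := Iio b))
  rw [sdiff_singleton_eq_self self_notMem_Iio] at hslope
  refine ge_of_tendsto hslope ?_
  filter_upwards [Ioo_mem_nhdsLT hab] with y hy
  rw [slope_def_field]
  exact div_nonneg_of_nonpos (sub_nonpos.mpr (hmax ⟨hy.1.le, hy.2.le⟩)) (sub_nonpos.mpr hy.2.le)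

theorem IsCompact.exists_isMaxOn_prod_univ {I : Set ℝ} (hI : IsCompact I) {F : ℝ × ℝ → ℝ}
    {M ε : ℝ} (hε : 0 < ε) (hF : ContinuousOn F (I ×ˢ univ))
    (hle : ∀ q ∈ I ×ˢ univ, F q ≤ M - ε * q.2 ^ 2) {p : ℝ × ℝ} (hp : p ∈ I ×ˢ univ) :
    ∃ q ∈ I ×ˢ univ, IsMaxOn F (I ×ˢ univ) q := by
  refine hF.exists_isMaxOn' (hI.isClosed.prod isClosed_univ) hp ?_
  obtain ⟨R, hR0, hR⟩ := ((eventually_ge_atTop 0).and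
    ((tendsto_pow_atTop two_ne_zero).eventually_ge_atTop ((M - F p) / ε))).exists
  refine (hasBasis_cocompact.inf_principal _).eventually_iff.2
    ⟨I ×ˢ Metric.closedBall 0 R, hI.prod (isCompact_closedBall 0 R), ?_⟩
  rintro q ⟨hqK, hqs⟩
  have hRq : R < |q.2| := by
    by_contra! h
    exact hqK ⟨hqs.1, by simpa [Real.dist_eq] using h⟩
  have hsq : R ^ 2 ≤ q.2 ^ 2 := by simpa [sq_abs] using pow_le_pow_left₀ hR0 hRq.le 2
  rw [div_le_iff₀ hε] at hR
  nlinarith [hle q hqs]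

noncomputable def heatOperator (u : ℝ → ℝ → ℝ) (t x : ℝ) : ℝ :=
  deriv (fun τ => u τ x) t - deriv (deriv (u t)) x

structure IsParabolicRegular (u : ℝ → ℝ → ℝ) : Prop where
  continuousOn : ContinuousOn (uncurry u) (Ici 0 ×ˢ univ)
  differentiableAt : ∀ x, ∀ t > 0, DifferentiableAt ℝ (fun τ => u τ x) t
  contDiff : ∀ t > 0, ContDiff ℝ 2 (u t)

theorem isParabolicRegular_exp_affine (A a b d : ℝ) :
    IsParabolicRegular fun t x => A * exp (a * t + b * x + d) where
  continuousOn :=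
    (by fun_prop : Continuous fun q : ℝ × ℝ => A * exp (a * q.1 + b * q.2 + d)).continuousOn
  differentiableAt x t _ := by fun_prop
  contDiff t _ := by fun_prop

theorem heatOperator_exp_affine (A a b d t x : ℝ) :
    heatOperator (fun t x => A * exp (a * t + b * x + d)) t x
      = (a - b ^ 2) * (A * exp (a * t + b * x + d)) := by
  have hspace (B y : ℝ) : HasDerivAt (fun y => B * exp (a * t + b * y + d))
      (b * B * exp (a * t + b * y + d)) y :=
    ((((hasDerivAt_id' y).const_mul b).const_add (a * t)).add_const d).exp.const_mul B
      |>.congr_deriv (by ring)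
  have htime : HasDerivAt (fun τ => A * exp (a * τ + b * x + d))
      (A * (exp (a * t + b * x + d) * a)) t := by
    simpa using
      (((hasDerivAt_id t).const_mul a).add_const (b * x) |>.add_const d |>.exp).const_mul A
  have hderiv : deriv (fun y => A * exp (a * t + b * y + d))
      = fun y => b * A * exp (a * t + b * y + d) := funext fun y => (hspace A y).deriv
  simp only [heatOperator, htime.deriv, hderiv, (hspace (b * A) x).deriv]
  ring

theorem isParabolicRegular_heat_quadratic (ε : ℝ) :
    IsParabolicRegular fun t x => ε * (x ^ 2 + 2 * t) where
  continuousOn :=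
    (by fun_prop : Continuous fun q : ℝ × ℝ => ε * (q.2 ^ 2 + 2 * q.1)).continuousOn
  differentiableAt x t _ := by fun_prop
  contDiff t _ := by fun_prop

theorem heatOperator_heat_quadratic (ε t x : ℝ) :
    heatOperator (fun t x => ε * (x ^ 2 + 2 * t)) t x = 0 := by
  have htime : HasDerivAt (fun τ => ε * (x ^ 2 + 2 * τ)) (ε * 2) t := by
    simpa using (((hasDerivAt_id t).const_mul 2).const_add (x ^ 2)).const_mul ε
  have hspace (y : ℝ) : HasDerivAt (fun y => ε * (y ^ 2 + 2 * t)) (2 * ε * y) y :=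
    (((hasDerivAt_pow 2 y).add_const (2 * t)).const_mul ε).congr_deriv (by norm_num; ring)
  have hderiv : deriv (fun y => ε * (y ^ 2 + 2 * t)) = fun y => 2 * ε * y :=
    funext fun y => (hspace y).deriv
  simp only [heatOperator, htime.deriv, hderiv]
  rw [deriv_const_mul_field', deriv_id'']
  ring

namespace IsParabolicRegular

variable {u w : ℝ → ℝ → ℝ}

theorem sub (hu : IsParabolicRegular u) (hw : IsParabolicRegular w) :
    IsParabolicRegular fun t x => u t x - w t x where
  continuousOn := hu.continuousOn.sub hw.continuousOn
  differentiableAt x t ht := (hu.differentiableAt x t ht).sub (hw.differentiableAt x t ht)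
  contDiff t ht := (hu.contDiff t ht).sub (hw.contDiff t ht)

theorem heatOperator_sub (hu : IsParabolicRegular u) (hw : IsParabolicRegular w) {t : ℝ}
    (ht : 0 < t) (x : ℝ) :
    heatOperator (fun t x => u t x - w t x) t x = heatOperator u t x - heatOperator w t x := by
  have hderiv : deriv (fun y => u t y - w t y) = fun y => deriv (u t) y - deriv (w t) y := by
    funext y
    exact deriv_fun_sub ((hu.contDiff t ht).differentiable two_ne_zero y)
      ((hw.contDiff t ht).differentiable two_ne_zero y)
  simp only [heatOperator, hderiv]
  rw [deriv_fun_sub (hu.differentiableAt x t ht) (hw.differentiableAt x t ht),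
    deriv_fun_sub ((hu.contDiff t ht).differentiable_deriv_two x)
      ((hw.contDiff t ht).differentiable_deriv_two x)]
  ring

theorem mul_exp (hu : IsParabolicRegular u) (a : ℝ) :
    IsParabolicRegular fun t x => u t x * exp (a * t) where
  continuousOn := hu.continuousOn.mul (by fun_prop)
  differentiableAt x t ht := (hu.differentiableAt x t ht).mul (by fun_prop)
  contDiff t ht := (hu.contDiff t ht).mul contDiff_const

theorem heatOperator_mul_exp (hu : IsParabolicRegular u) (a : ℝ) {t : ℝ} (ht : 0 < t) (x : ℝ) :
    heatOperator (fun t x => u t x * exp (a * t)) t x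
      = (heatOperator u t x + a * u t x) * exp (a * t) := by
  have htime : HasDerivAt (fun τ => u τ x * exp (a * τ))
      (deriv (fun τ => u τ x) t * exp (a * t) + u t x * (exp (a * t) * a)) t :=
    (hu.differentiableAt x t ht).hasDerivAt.mul
      (by simpa using ((hasDerivAt_id t).const_mul a).exp)
  simp only [heatOperator, htime.deriv, deriv_mul_const_field']
  ring

theorem nonpos_of_heatOperator_neg_of_coercive {M ε : ℝ} (hu : IsParabolicRegular u) (hε : 0 < ε)
    (hbd : ∀ t ≥ 0, ∀ x, u t x ≤ M - ε * x ^ 2) (h0 : ∀ x, u 0 x ≤ 0)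
    (hneg : ∀ t > 0, ∀ x, 0 < u t x → heatOperator u t x < 0) :
    ∀ t ≥ 0, ∀ x, u t x ≤ 0 := by
  intro T hT x₁
  by_contra! hpos
  obtain ⟨⟨t₀, x₀⟩, ⟨ht₀T, -⟩, hmax⟩ := isCompact_Icc.exists_isMaxOn_prod_univ hε
    (hu.continuousOn.mono (prod_mono Icc_subset_Ici_self subset_rfl))
    (fun q hq => hbd q.1 hq.1.1 q.2) (p := (T, x₁)) ⟨⟨hT, le_rfl⟩, trivial⟩
  replace hmax : ∀ t ∈ Icc 0 T, ∀ x, u t x ≤ u t₀ x₀ := fun t ht x =>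
    isMaxOn_iff.mp hmax (t, x) ⟨ht, trivial⟩
  have hu₀ : 0 < u t₀ x₀ := hpos.trans_le (hmax T ⟨hT, le_rfl⟩ x₁)
  have ht₀ : 0 < t₀ := ht₀T.1.lt_of_ne (by rintro rfl; exact (h0 x₀).not_gt hu₀)
  have htime : 0 ≤ deriv (fun τ => u τ x₀) t₀ :=
    IsMaxOn.deriv_nonneg_of_right_endpoint ht₀
      (fun τ hτ => hmax τ ⟨hτ.1, hτ.2.trans ht₀T.2⟩ x₀) (hu.differentiableAt x₀ t₀ ht₀)
  have hspace : deriv (deriv (u t₀)) x₀ ≤ 0 :=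
    IsLocalMax.deriv_deriv_nonpos (Eventually.of_forall (hmax t₀ ht₀T))
      (hu.contDiff t₀ ht₀).continuous.continuousAt
  exact (hneg t₀ ht₀ x₀ hu₀).not_ge (by unfold heatOperator; linarith)

theorem nonpos_of_heatOperator_neg {M : ℝ} (hu : IsParabolicRegular u)
    (hbd : ∀ t ≥ 0, ∀ x, u t x ≤ M) (h0 : ∀ x, u 0 x ≤ 0)
    (hneg : ∀ t > 0, ∀ x, 0 < u t x → heatOperator u t x < 0) :
    ∀ t ≥ 0, ∀ x, u t x ≤ 0 := by
  intro t ht x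
  -- `ε (x² + 2t)` solves the heat equation, and subtracting it makes a maximum exist.
  have hpenalized : ∀ ε > 0, u t x ≤ ε * (x ^ 2 + 2 * t) := by
    intro ε hε
    have hq := isParabolicRegular_heat_quadratic ε
    refine sub_nonpos.mp
      ((hu.sub hq).nonpos_of_heatOperator_neg_of_coercive hε (M := M) ?_ ?_ ?_ t ht x)
    · intro t ht x
      nlinarith [hbd t ht x]
    · intro x
      nlinarith [h0 x, sq_nonneg x]
    · intro t ht x hpos
      rw [hu.heatOperator_sub hq ht, heatOperator_heat_quadratic, sub_zero]
      exact hneg t ht x (by nlinarith [sq_nonneg x])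
  have hlim : Tendsto (fun ε => ε * (x ^ 2 + 2 * t)) (𝓝[>] 0) (𝓝 0) := by
    simpa using ((tendsto_id (x := 𝓝 (0 : ℝ))).mul_const (x ^ 2 + 2 * t)).mono_left
      nhdsWithin_le_nhds
  exact ge_of_tendsto hlim (eventually_nhdsWithin_of_forall hpenalized)

theorem nonpos_of_heatOperator_le {K M : ℝ} (hu : IsParabolicRegular u)
    (hbd : ∀ t ≥ 0, ∀ x, u t x ≤ M) (h0 : ∀ x, u 0 x ≤ 0)
    (hsub : ∀ t > 0, ∀ x, heatOperator u t x ≤ K * u t x) :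
    ∀ t ≥ 0, ∀ x, u t x ≤ 0 := by
  -- Damping by `exp (-μ t)` with `μ > K` makes `u` a strict subsolution wherever it is positive.
  set μ := |K| + 1
  have hμ : K < μ := by linarith [le_abs_self K]
  have hdamped : ∀ t ≥ 0, ∀ x, u t x * exp (-μ * t) ≤ 0 := by
    refine (hu.mul_exp (-μ)).nonpos_of_heatOperator_neg (M := max M 0) ?_ (by simpa using h0) ?_
    · intro t ht x
      have he : exp (-μ * t) ≤ 1 := exp_le_one_iff.mpr (by nlinarith [abs_nonneg K])
      rcases le_or_gt (u t x) 0 with hu0 | hu0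
      · exact (mul_nonpos_of_nonpos_of_nonneg hu0 (exp_pos _).le).trans (le_max_right _ _)
      · nlinarith [hbd t ht x, le_max_left M 0]
    · intro t ht x hpos
      have hu0 : 0 < u t x := pos_of_mul_pos_left hpos (exp_pos _).le
      rw [hu.heatOperator_mul_exp _ ht]
      exact mul_neg_of_neg_of_pos (by nlinarith [hsub t ht x]) (exp_pos _)
  exact fun t ht x => nonpos_of_mul_nonpos_left (hdamped t ht x) (exp_pos _)

theorem le_of_heatOperator_le {K M : ℝ} (hu : IsParabolicRegular u) (hw : IsParabolicRegular w)
    (hbd : ∀ t ≥ 0, ∀ x, u t x - w t x ≤ M) (h0 : ∀ x, u 0 x ≤ w 0 x)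
    (hsub : ∀ t > 0, ∀ x, heatOperator u t x ≤ K * u t x)
    (hsup : ∀ t > 0, ∀ x, K * w t x ≤ heatOperator w t x) :
    ∀ t ≥ 0, ∀ x, u t x ≤ w t x := by
  refine fun t ht x => sub_nonpos.mp ((hu.sub hw).nonpos_of_heatOperator_le (K := K) hbd
    (fun x => sub_nonpos.mpr (h0 x)) (fun t ht x => ?_) t ht x)
  rw [hu.heatOperator_sub hw ht]
  linarith [hsub t ht x, hsup t ht x]

theorem tendsto_sSup_image_abs_ge {K c : ℝ} (hu : IsParabolicRegular u) (hc : 2 * √K < c)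
    (hnn : ∀ t ≥ 0, ∀ x, 0 ≤ u t x) (hbd : ∃ M, ∀ t ≥ 0, ∀ x, u t x ≤ M)
    (h0 : HasCompactSupport (u 0)) (hsub : ∀ t > 0, ∀ x, heatOperator u t x ≤ K * u t x) :
    Tendsto (fun t => sSup (u t '' {x | c * t ≤ |x|})) atTop (𝓝 0) := by
  obtain ⟨M, hM⟩ := hbd
  obtain ⟨R, hR⟩ := h0.isBounded.subset_closedBall 0
  set A := max M 0
  -- `q = c / 2` maximizes the decay rate `q c - q ^ 2 - K` of the envelopes on `|x| ≥ c t`.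
  set q := c / 2 with hqc
  have hq : 0 < q := by linarith [sqrt_nonneg K]
  have hKq : K < q ^ 2 := (sqrt_lt' hq).mp (by linarith)
  have henvelope : ∀ b, |b| = q → ∀ t ≥ 0, ∀ x,
      u t x ≤ A * exp ((q ^ 2 + K) * t + b * x + q * R) := by
    intro b hb
    have hb2 : b ^ 2 = q ^ 2 := by rw [← sq_abs, hb]
    refine hu.le_of_heatOperator_le (isParabolicRegular_exp_affine _ _ _ _) (M := A) ?_ ?_ hsub ?_
    · intro t ht x
      nlinarith [hM t ht x, le_max_left M 0, le_max_right M 0,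
        exp_pos ((q ^ 2 + K) * t + b * x + q * R)]
    · intro x
      by_cases hx : x ∈ tsupport (u 0)
      · have hxR : |x| ≤ R := by simpa [Real.dist_eq] using hR hx
        have hbx : -(q * R) ≤ b * x := by
          have := abs_le.mp (show |b * x| ≤ q * R by rw [abs_mul, hb]; gcongr)
          linarith
        have he : 1 ≤ exp ((q ^ 2 + K) * 0 + b * x + q * R) := one_le_exp (by linarith)
        nlinarith [hM 0 le_rfl x, le_max_left M 0, le_max_right M 0]
      · rw [image_eq_zero_of_notMem_tsupport hx]
        positivity
    · intro t _ x
      rw [heatOperator_exp_affine, hb2, add_sub_cancel_left]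
  have hdecay : ∀ t ≥ 0, ∀ x, c * t ≤ |x| →
      u t x ≤ A * exp (q * R) * exp ((K - q ^ 2) * t) := by
    intro t ht x hx
    obtain ⟨b, hb, hbx⟩ : ∃ b, |b| = q ∧ b * x = -(q * |x|) := by
      rcases le_or_gt 0 x with h | h
      · exact ⟨-q, by simp [hq.le], by rw [abs_of_nonneg h]; ring⟩
      · exact ⟨q, abs_of_pos hq, by rw [abs_of_neg h]; ring⟩
    rw [mul_assoc, ← exp_add]
    refine (henvelope b hb t ht x).trans
      (mul_le_mul_of_nonneg_left (exp_le_exp.mpr ?_) (le_max_right M 0))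
    have hqx : q * (c * t) ≤ q * |x| := mul_le_mul_of_nonneg_left hx hq.le
    have hqc2 : q * (c * t) = 2 * q ^ 2 * t := by rw [hqc]; ring
    linarith
  have hlim : Tendsto (fun t => A * exp (q * R) * exp ((K - q ^ 2) * t)) atTop (𝓝 0) := by
    simpa using (tendsto_exp_atBot.comp
      (tendsto_id.const_mul_atTop_of_neg (sub_neg.mpr hKq))).const_mul (A * exp (q * R))
  refine tendsto_of_tendsto_of_tendsto_of_le_of_le' tendsto_const_nhds hlim ?_ ?_
  · filter_upwards [eventually_ge_atTop 0] with t ht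
    exact Real.sSup_nonneg (by rintro _ ⟨x, -, rfl⟩; exact hnn t ht x)
  · filter_upwards [eventually_ge_atTop 0] with t ht
    exact Real.sSup_le (by rintro _ ⟨x, hx, rfl⟩; exact hdecay t ht x hx) (by positivity)

end IsParabolicRegular

theorem drive_growth_rate_le_s3 {s r nD nO : ℝ} (hs : s < 1) (hr : 0 < r) (hD : 0 ≤ nD)
    (hO : 0 < nO) (hbirth : nD + nO ≤ 1 + 1 / r) :
    (1 - s) * (1 + nO / (nD + nO)) * (r * (1 - nD - nO) + 1) - 1
      ≤ 2 * (1 - s) * (r + 1) - 1 := by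
  have hρ : nO / (nD + nO) ≤ 1 := div_le_one_of_le₀ (by linarith) (by linarith)
  have hbirth_rate : 0 ≤ r * (1 - nD - nO) + 1 := by
    have : r * (nD + nO) ≤ r + 1 :=
      calc r * (nD + nO) ≤ r * (1 + 1 / r) := by gcongr
        _ = r + 1 := by field_simp
    linarith
  have hfactor : (1 - s) * (1 + nO / (nD + nO)) ≤ 2 * (1 - s) := by nlinarith
  have hfactor0 : 0 ≤ (1 - s) * (1 + nO / (nD + nO)) := by
    have := div_nonneg hO.le (by linarith : 0 ≤ nD + nO)
    nlinarith
  nlinarith [mul_le_mul hfactor (show r * (1 - nD - nO) + 1 ≤ r + 1 by nlinarith)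
    hbirth_rate (by linarith)]

theorem stmt3_general
    (s r : ℝ) (hs : s ∈ Set.Ico (0 : ℝ) 1)
    (hr : 0 < r)
    (nD nO : ℝ → ℝ → ℝ)
    (hDcont : ContinuousOn (fun q : ℝ × ℝ => nD q.1 q.2) (Set.Ici 0 ×ˢ Set.univ))
    (hDt : ∀ x : ℝ, ContDiffOn ℝ 1 (fun t => nD t x) (Set.Ioi 0))
    (hDx : ∀ t > (0 : ℝ), ContDiff ℝ 2 (fun x => nD t x))
    (hDnn : ∀ t ≥ (0 : ℝ), ∀ x, 0 ≤ nD t x)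
    (hOpos : ∀ t ≥ (0 : ℝ), ∀ x, 0 < nO t x)
    (hDbd : ∃ M : ℝ, ∀ t ≥ (0 : ℝ), ∀ x, nD t x ≤ M)
    (hD0supp : HasCompactSupport (fun x => nD 0 x))
    (hbirth : ∀ t ≥ (0 : ℝ), ∀ x, nD t x + nO t x ≤ 1 + 1 / r)
    (heqD : ∀ t > (0 : ℝ), ∀ x,
      deriv (fun τ => nD τ x) t - deriv (deriv (fun y => nD t y)) x
        = nD t x * ((1 - s) * (1 + nO t x / (nD t x + nO t x))
            * (r * (1 - nD t x - nO t x) + 1) - 1)) :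
    ∀ c' : ℝ, 2 * Real.sqrt (2 * (1 - s) * (r + 1) - 1) < c' →
      Filter.Tendsto
        (fun t : ℝ => sSup ((fun x => nD t x) '' {x : ℝ | c' * t ≤ |x|}))
        Filter.atTop (nhds 0) := by
  intro c' hc'
  have hD : IsParabolicRegular nD :=
    ⟨hDcont, fun x t ht =>
      ((hDt x).differentiableOn one_ne_zero).differentiableAt (Ioi_mem_nhds ht), hDx⟩
  refine hD.tendsto_sSup_image_abs_ge hc' hDnn hDbd hD0supp fun t ht x => ?_
  calc heatOperator nD t x
      = nD t x * ((1 - s) * (1 + nO t x / (nD t x + nO t x))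
          * (r * (1 - nD t x - nO t x) + 1) - 1) := heqD t ht x
    _ ≤ nD t x * (2 * (1 - s) * (r + 1) - 1) :=
        mul_le_mul_of_nonneg_left (drive_growth_rate_le_s3 hs.2 hr (hDnn t ht.le x)
          (hOpos t ht.le x) (hbirth t ht.le x)) (hDnn t ht.le x)
    _ = (2 * (1 - s) * (r + 1) - 1) * nD t x := mul_comm _ _

/-- If `s ∈ [0,1)` and `r > (2s-1)/(2(1-s))`, `r > 0`, then for any bounded
classical solution of the gene-drive reaction–diffusion system on `(0,∞) × ℝ` with
compactly supported initial drive density and nonnegative per-capita birth rate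
(`n_D + n_O ≤ 1 + 1/r`), the drive spreads at most at speed `2√(2(1-s)(r+1) - 1)`:
for every `c' > 2√(2(1-s)(r+1) - 1)`, `sup_{|x| ≥ c' t} n_D(t,x) → 0` as `t → +∞`. -/
theorem stmt3
    (s r : ℝ) (hs : s ∈ Set.Ico (0 : ℝ) 1)
    (hr : 0 < r) (hr' : (2 * s - 1) / (2 * (1 - s)) < r)
    (nD nO : ℝ → ℝ → ℝ)
    (hDcont : ContinuousOn (fun q : ℝ × ℝ => nD q.1 q.2) (Set.Ici 0 ×ˢ Set.univ))
    (hOcont : ContinuousOn (fun q : ℝ × ℝ => nO q.1 q.2) (Set.Ici 0 ×ˢ Set.univ))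
    (hDt : ∀ x : ℝ, ContDiffOn ℝ 1 (fun t => nD t x) (Set.Ioi 0))
    (hOt : ∀ x : ℝ, ContDiffOn ℝ 1 (fun t => nO t x) (Set.Ioi 0))
    (hDx : ∀ t > (0 : ℝ), ContDiff ℝ 2 (fun x => nD t x))
    (hOx : ∀ t > (0 : ℝ), ContDiff ℝ 2 (fun x => nO t x))
    (hDnn : ∀ t ≥ (0 : ℝ), ∀ x, 0 ≤ nD t x)
    (hOpos : ∀ t ≥ (0 : ℝ), ∀ x, 0 < nO t x)
    (hDbd : ∃ M : ℝ, ∀ t ≥ (0 : ℝ), ∀ x, nD t x ≤ M)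
    (hD0supp : HasCompactSupport (fun x => nD 0 x))
    (hbirth : ∀ t ≥ (0 : ℝ), ∀ x, nD t x + nO t x ≤ 1 + 1 / r)
    (heqD : ∀ t > (0 : ℝ), ∀ x,
      deriv (fun τ => nD τ x) t - deriv (deriv (fun y => nD t y)) x
        = nD t x * ((1 - s) * (1 + nO t x / (nD t x + nO t x))
            * (r * (1 - nD t x - nO t x) + 1) - 1))
    (heqO : ∀ t > (0 : ℝ), ∀ x,
      deriv (fun τ => nO τ x) t - deriv (deriv (fun y => nO t y)) x
        = nO t x * ((nO t x / (nD t x + nO t x))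
            * (r * (1 - nD t x - nO t x) + 1) - 1)) :
    ∀ c' : ℝ, 2 * Real.sqrt (2 * (1 - s) * (r + 1) - 1) < c' →
      Filter.Tendsto
        (fun t : ℝ => sSup ((fun x => nD t x) '' {x : ℝ | c' * t ≤ |x|}))
        Filter.atTop (nhds 0) :=
  stmt3_general s r hs hr nD nO hDcont hDt hDx hDnn hOpos hDbd hD0supp hbirth heqD
end

section
/- Let s ∈ [0,1), r > 0, c ∈ ℝ, and let (N_D, N_O) be a traveling-wave profile of the gene-drive density system with speed c such that N_D(x) > 0 and N_O(x) ≥ 0 for all x, (N_D(x), N_O(x)) → (0, 1) as x → -∞, liminf_{x→-∞} N_D''(x)/N_D(x) > 0, and liminf_{x→-∞} N_D'(x)/N_D(x) > 0. If c ≥ 0, then s ≥ 1/2; equivalently, if s < 1/2 then necessarily c < 0. -/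
/-! At `-∞` the drive equation, divided by `N_D > 0`, reads
`N_D''/N_D + c N_D'/N_D = -g(N_D, N_O)`, where the per-capita growth rate `g` of the drive tends
to `(1 - s) · 2 · 1 - 1 = 1 - 2s` as `(N_D, N_O) → (0, 1)`. If `c ≥ 0`, the positive liminfs make
the left side eventually at least some `a > 0`, so `1 - 2s ≤ -a < 0`. -/

open Filter Topology

noncomputable def driveGrowth (s r nD nO : ℝ) : ℝ :=
  (1 - s) * (1 + nO / (nD + nO)) * (r * (1 - nD - nO) + 1) - 1

lemma tendsto_driveGrowth {α : Type*} {l : Filter α} {nD nO : α → ℝ} (s r : ℝ)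
    (h : Tendsto (fun x => (nD x, nO x)) l (𝓝 (0, 1))) :
    Tendsto (fun x => driveGrowth s r (nD x) (nO x)) l (𝓝 (1 - 2 * s)) := by
  have hcont : ContinuousAt (fun p : ℝ × ℝ => driveGrowth s r p.1 p.2) (0, 1) := by
    unfold driveGrowth
    fun_prop (disch := norm_num)
  have hval : driveGrowth s r 0 1 = 1 - 2 * s := by
    unfold driveGrowth
    ring
  simpa only [hval, Function.comp_def] using hcont.tendsto.comp h

/-- No boundedness hypothesis is needed: in `ℝ`, an empty or unbounded set of eventual lower
bounds would give the junk value `liminf f l = 0`. -/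
lemma exists_pos_eventually_le_of_liminf_pos {α : Type*} {l : Filter α} {f : α → ℝ}
    (h : 0 < liminf f l) : ∃ a > 0, ∀ᶠ x in l, a ≤ f x := by
  rw [liminf_eq] at h
  by_contra! hcon
  have : sSup {a | ∀ᶠ x in l, a ≤ f x} ≤ 0 := by
    refine Real.sSup_le (fun b hb => ?_) le_rfl
    by_contra! hb0
    exact hcon b hb0 (hb.mono fun x hx => not_lt.mpr hx)
  linarith

lemma le_neg_of_tendsto_of_eventually_eq {α : Type*} {l : Filter α} [l.NeBot]
    {u du d2u g : α → ℝ} {c a L : ℝ} (hc : 0 ≤ c)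
    (hu : ∀ᶠ x in l, 0 < u x)
    (heq : ∀ᶠ x in l, -d2u x - c * du x = u x * g x)
    (hd2u : ∀ᶠ x in l, a ≤ d2u x / u x)
    (hdu : ∀ᶠ x in l, 0 ≤ du x / u x)
    (hg : Tendsto g l (𝓝 L)) : L ≤ -a := by
  refine le_of_tendsto hg ?_
  filter_upwards [hu, heq, hd2u, hdu] with x hux heqx hd2ux hdux
  have hgx : g x = -(d2u x / u x) - c * (du x / u x) := by
    field_simp
    linarith
  rw [hgx]
  nlinarith [mul_nonneg hc hdux]

theorem stmt4_general
    (s r c : ℝ)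
    (ND NO : ℝ → ℝ)
    (hDpos : ∀ x, 0 < ND x)
    (hlim : Filter.Tendsto (fun x => (ND x, NO x)) Filter.atBot (nhds (0, 1)))
    (hliminf2 : 0 < Filter.liminf (fun x => deriv (deriv ND) x / ND x) Filter.atBot)
    (hliminf1 : 0 < Filter.liminf (fun x => deriv ND x / ND x) Filter.atBot)
    (heqD : ∀ x, -deriv (deriv ND) x - c * deriv ND x
      = ND x * ((1 - s) * (1 + NO x / (ND x + NO x))
          * (r * (1 - ND x - NO x) + 1) - 1)) :
    (0 ≤ c → 1 / 2 ≤ s) ∧ (s < 1 / 2 → c < 0) := by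
  have half_le_cost : 0 ≤ c → 1 / 2 ≤ s := by
    intro hc
    obtain ⟨a, ha, hd2⟩ := exists_pos_eventually_le_of_liminf_pos hliminf2
    obtain ⟨b, hb, hd1⟩ := exists_pos_eventually_le_of_liminf_pos hliminf1
    have hle : 1 - 2 * s ≤ -a :=
      le_neg_of_tendsto_of_eventually_eq (g := fun x => driveGrowth s r (ND x) (NO x)) hc
        (.of_forall hDpos) (.of_forall heqD) hd2 (hd1.mono fun x hx => hb.le.trans hx)
        (tendsto_driveGrowth s r hlim)
    linarith
  exact ⟨half_le_cost, fun hs => lt_of_not_ge fun hc => (half_le_cost hc).not_gt hs⟩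

/-- For a traveling-wave profile `(N_D, N_O)` of the gene-drive density
system with `N_D > 0`, `N_O ≥ 0`, `(N_D, N_O) → (0,1)` at `-∞`, and positive liminf
at `-∞` of both `N_D''/N_D` and `N_D'/N_D`: if `c ≥ 0` then `s ≥ 1/2`; equivalently,
if `s < 1/2` then `c < 0`. -/
theorem stmt4
    (s r c : ℝ) (hs : s ∈ Set.Ico (0 : ℝ) 1) (hr : 0 < r)
    (ND NO : ℝ → ℝ)
    (hD2 : ContDiff ℝ 2 ND) (hO2 : ContDiff ℝ 2 NO)
    (hsum : ∀ x, 0 < ND x + NO x)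
    (hDpos : ∀ x, 0 < ND x) (hOnn : ∀ x, 0 ≤ NO x)
    (hlim : Filter.Tendsto (fun x => (ND x, NO x)) Filter.atBot (nhds (0, 1)))
    (hliminf2 : 0 < Filter.liminf (fun x => deriv (deriv ND) x / ND x) Filter.atBot)
    (hliminf1 : 0 < Filter.liminf (fun x => deriv ND x / ND x) Filter.atBot)
    (heqD : ∀ x, -deriv (deriv ND) x - c * deriv ND x
      = ND x * ((1 - s) * (1 + NO x / (ND x + NO x))
          * (r * (1 - ND x - NO x) + 1) - 1))
    (heqO : ∀ x, -deriv (deriv NO) x - c * deriv NO x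
      = NO x * ((NO x / (ND x + NO x)) * (r * (1 - ND x - NO x) + 1) - 1)) :
    (0 ≤ c → 1 / 2 ≤ s) ∧ (s < 1 / 2 → c < 0) :=
  stmt4_general s r c ND NO hDpos hlim hliminf2 hliminf1 heqD
end

section
/- Let s ∈ [0,1), r > 0, c ∈ ℝ, and let (N_D, N_O) be a traveling-wave profile of the gene-drive density system with speed c such that N_D(x) > 0 and N_O(x) ≥ 0 for all x and (N_D(x), N_O(x)) → (0, 1) as x → -∞. Suppose there exists λ > 0 such that N_D''(x)/N_D(x) → λ² and N_D'(x)/N_D(x) → λ as x → -∞. Then λ² + c·λ + (1 - 2s) = 0; in particular, if s ≤ 1/2 then c ≤ -2√(1-2s). -/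
/-!
Dividing the equation for `N_D` by `N_D` and letting `x → -∞`, the left side tends to
`-λ² - cλ`, while the per-capita growth rate of the drive tends to its value `1 - 2s` at the
wild-type equilibrium `(0, 1)`. Since `λ > 0`, the bound on `c` is AM–GM applied to
`-c = λ + (1 - 2s) / λ`.
-/

open Filter Topology

noncomputable def driveGrowthRate (s r nD nO : ℝ) : ℝ :=
  (1 - s) * (1 + nO / (nD + nO)) * (r * (1 - nD - nO) + 1) - 1

theorem driveGrowthRate_zero_one (s r : ℝ) : driveGrowthRate s r 0 1 = 1 - 2 * s := by
  unfold driveGrowthRate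
  ring

theorem tendsto_driveGrowthRate {α : Type*} {l : Filter α} {f g : α → ℝ} (s r : ℝ)
    (hf : Tendsto f l (𝓝 0)) (hg : Tendsto g l (𝓝 1)) :
    Tendsto (fun x => driveGrowthRate s r (f x) (g x)) l (𝓝 (1 - 2 * s)) := by
  rw [← driveGrowthRate_zero_one s r]
  unfold driveGrowthRate
  refine Tendsto.sub_const (Tendsto.mul (tendsto_const_nhds.add
    (hg.div (hf.add hg) (by norm_num)) |>.const_mul _) ?_) _
  exact ((tendsto_const_nhds.sub hf).sub hg).const_mul r |>.add_const 1

theorem neg_sub_mul_eq_of_tendsto_div {α : Type*} {l : Filter α} [l.NeBot]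
    {u v w F : α → ℝ} {c a b L : ℝ} (hu : ∀ x, u x ≠ 0)
    (heq : ∀ x, -v x - c * w x = u x * F x)
    (hv : Tendsto (fun x => v x / u x) l (𝓝 a)) (hw : Tendsto (fun x => w x / u x) l (𝓝 b))
    (hF : Tendsto F l (𝓝 L)) : -a - c * b = L := by
  have hF_eq : ∀ x, -(v x / u x) - c * (w x / u x) = F x := fun x => by
    rw [← mul_div_assoc, ← neg_div, ← sub_div, heq x, mul_div_cancel_left₀ _ (hu x)]
  exact tendsto_nhds_unique ((hv.neg.sub (hw.const_mul c)).congr hF_eq) hF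

theorem le_neg_two_mul_sqrt_of_sq_add_mul_add_eq_zero {x c a : ℝ} (hx : 0 < x) (ha : 0 ≤ a)
    (h : x ^ 2 + c * x + a = 0) : c ≤ -2 * Real.sqrt a := by
  nlinarith [sq_nonneg (x - Real.sqrt a), Real.sq_sqrt ha, Real.sqrt_nonneg a]

theorem stmt5_general
    (s r c : ℝ)
    (ND NO : ℝ → ℝ)
    (hDpos : ∀ x, 0 < ND x)
    (hlim : Filter.Tendsto (fun x => (ND x, NO x)) Filter.atBot (nhds (0, 1)))
    (lam : ℝ) (hlam : 0 < lam)
    (hlim2 : Filter.Tendsto (fun x => deriv (deriv ND) x / ND x) Filter.atBot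
      (nhds (lam ^ 2)))
    (hlim1 : Filter.Tendsto (fun x => deriv ND x / ND x) Filter.atBot (nhds lam))
    (heqD : ∀ x, -deriv (deriv ND) x - c * deriv ND x
      = ND x * ((1 - s) * (1 + NO x / (ND x + NO x))
          * (r * (1 - ND x - NO x) + 1) - 1)) :
    lam ^ 2 + c * lam + (1 - 2 * s) = 0 ∧
      (s ≤ 1 / 2 → c ≤ -2 * Real.sqrt (1 - 2 * s)) := by
  have hgrowth : Tendsto (fun x => driveGrowthRate s r (ND x) (NO x)) atBot (𝓝 (1 - 2 * s)) :=
    tendsto_driveGrowthRate s r ((continuous_fst.tendsto _).comp hlim)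
      ((continuous_snd.tendsto _).comp hlim)
  have hchar : -lam ^ 2 - c * lam = 1 - 2 * s :=
    neg_sub_mul_eq_of_tendsto_div (fun x => (hDpos x).ne') heqD hlim2 hlim1 hgrowth
  have hroot : lam ^ 2 + c * lam + (1 - 2 * s) = 0 := by linarith
  exact ⟨hroot, fun hs => le_neg_two_mul_sqrt_of_sq_add_mul_add_eq_zero hlam (by linarith) hroot⟩

/-- For a traveling-wave profile `(N_D, N_O)` of the gene-drive density
system with `N_D > 0`, `N_O ≥ 0`, `(N_D, N_O) → (0,1)` at `-∞`, if there exists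
`λ > 0` with `N_D''/N_D → λ²` and `N_D'/N_D → λ` at `-∞`, then
`λ² + cλ + (1-2s) = 0`; in particular, if `s ≤ 1/2` then `c ≤ -2√(1-2s)`. -/
theorem stmt5
    (s r c : ℝ) (hs : s ∈ Set.Ico (0 : ℝ) 1) (hr : 0 < r)
    (ND NO : ℝ → ℝ)
    (hD2 : ContDiff ℝ 2 ND) (hO2 : ContDiff ℝ 2 NO)
    (hsum : ∀ x, 0 < ND x + NO x)
    (hDpos : ∀ x, 0 < ND x) (hOnn : ∀ x, 0 ≤ NO x)
    (hlim : Filter.Tendsto (fun x => (ND x, NO x)) Filter.atBot (nhds (0, 1)))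
    (lam : ℝ) (hlam : 0 < lam)
    (hlim2 : Filter.Tendsto (fun x => deriv (deriv ND) x / ND x) Filter.atBot
      (nhds (lam ^ 2)))
    (hlim1 : Filter.Tendsto (fun x => deriv ND x / ND x) Filter.atBot (nhds lam))
    (heqD : ∀ x, -deriv (deriv ND) x - c * deriv ND x
      = ND x * ((1 - s) * (1 + NO x / (ND x + NO x))
          * (r * (1 - ND x - NO x) + 1) - 1))
    (heqO : ∀ x, -deriv (deriv NO) x - c * deriv NO x
      = NO x * ((NO x / (ND x + NO x)) * (r * (1 - ND x - NO x) + 1) - 1)) :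
    lam ^ 2 + c * lam + (1 - 2 * s) = 0 ∧
      (s ≤ 1 / 2 → c ≤ -2 * Real.sqrt (1 - 2 * s)) :=
  stmt5_general s r c ND NO hDpos hlim lam hlam hlim2 hlim1 heqD
end

section
/- Let s ∈ [0, 1/2], r > 0, c ∈ ℝ, and let (P, N) be a nontrivial traveling wave of the gene-drive frequency system with speed c whose profile P is strictly increasing. Then c < 0. -/
/-!
Suppose `c ≥ 0`. The weighted slope `Q = N² P'` satisfies `Q' = -c Q - N² g`, where `g ≥ 0` is the
reaction term of the `P`-equation on the half-line where `P < 1` (this is where `s ≤ 1/2` enters).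
Hence `Q` is antitone there, so going left it stays above its positive value at some point `ξ`.
As `N ≤ 1`, this bounds `P' ≥ Q ≥ Q ξ > 0` on `(-∞, ξ]`, so `P → -∞` at `-∞`, contradicting `P → 0`.
-/

open Filter Set

theorem tendsto_atBot_atBot_of_pos_le_deriv {f : ℝ → ℝ} {a δ : ℝ} (hf : Differentiable ℝ f)
    (hδ : 0 < δ) (hf' : ∀ x ≤ a, δ ≤ deriv f x) : Tendsto f atBot atBot := by
  have hlin : ∀ x ≤ a, f x ≤ δ * x + (f a - δ * a) := by
    intro x hx
    have := (convex_Iic a).mul_sub_le_image_sub_of_le_deriv hf.continuous.continuousOn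
      hf.differentiableOn (fun y hy => hf' y (interior_subset (s := Iic a) hy))
      x hx a self_mem_Iic hx
    linarith
  refine tendsto_atBot_mono' atBot ?_
    (tendsto_atBot_add_const_right _ (f a - δ * a) (tendsto_id.const_mul_atBot hδ))
  filter_upwards [eventually_le_atBot a] with x hx using hlin x hx

theorem StrictMono.exists_deriv_pos_of_lt {f : ℝ → ℝ} (hf : StrictMono f) (hd : Differentiable ℝ f)
    {a b : ℝ} (hab : a < b) : ∃ ξ ∈ Ioo a b, 0 < deriv f ξ := by
  obtain ⟨ξ, hξ, hslope⟩ := exists_deriv_eq_slope f hab hd.continuous.continuousOn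
    hd.differentiableOn
  exact ⟨ξ, hξ, hslope ▸ div_pos (sub_pos.2 (hf hab)) (sub_pos.2 hab)⟩

theorem hasDerivAt_sq_mul_deriv {P N : ℝ → ℝ} {c g x : ℝ} (hP : DifferentiableAt ℝ (deriv P) x)
    (hN : DifferentiableAt ℝ N x) (hNx : N x ≠ 0)
    (heq : -deriv (deriv P) x - c * deriv P x - 2 * (deriv N x / N x) * deriv P x = g) :
    HasDerivAt (fun y => N y ^ 2 * deriv P y) (-c * (N x ^ 2 * deriv P x) - N x ^ 2 * g) x := by
  refine ((hN.hasDerivAt.fun_pow 2).fun_mul hP.hasDerivAt).congr_deriv ?_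
  subst heq
  field_simp
  ring

theorem geneDrive_reaction_nonneg {s r n p : ℝ} (hs0 : 0 ≤ s) (hs : s ≤ 1 / 2) (hr : 0 ≤ r)
    (hn : n ≤ 1) (hp0 : 0 ≤ p) (hp1 : p ≤ 1) :
    0 ≤ (r * (1 - n) + 1) * p * (1 - p) * (s * p - (2 * s - 1)) := by
  have h1 : 0 ≤ r * (1 - n) + 1 := by nlinarith
  have h2 : 0 ≤ s * p - (2 * s - 1) := by nlinarith
  have h3 : 0 ≤ 1 - p := by linarith
  positivity

theorem stmt6_general
    (s r c : ℝ) (hs0 : 0 ≤ s) (hs : s ≤ 1 / 2) (hr : 0 < r)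
    (P N : ℝ → ℝ)
    (hP2 : ContDiff ℝ 2 P) (hN2 : ContDiff ℝ 2 N)
    (hNpos : ∀ x, 0 < N x)
    (hPnn : ∀ x, 0 ≤ P x)
    (hPmono : StrictMono P) (hNanti : StrictAnti N)
    (hPlim : Filter.Tendsto P Filter.atBot (nhds 0))
    (hNlim : Filter.Tendsto N Filter.atBot (nhds 1))
    (heqP : ∀ x, -deriv (deriv P) x - c * deriv P x - 2 * (deriv N x / N x) * deriv P x
      = (r * (1 - N x) + 1) * P x * (1 - P x) * (s * P x - (2 * s - 1))) :
    c < 0 := by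
  by_contra! hc
  have hPd : Differentiable ℝ P := hP2.differentiable (by norm_num)
  have hP'd : Differentiable ℝ (deriv P) := (hP2.deriv' (n := 1)).differentiable one_ne_zero
  have hNd : Differentiable ℝ N := hN2.differentiable (by norm_num)
  have hNle : ∀ x, N x ≤ 1 := hNanti.antitone.ge_of_tendsto hNlim
  have hP' : ∀ x, 0 ≤ deriv P x := fun x => hPmono.monotone.deriv_nonneg
  obtain ⟨b, hb⟩ : ∃ b, P b < 1 := (hPlim.eventually (eventually_lt_nhds one_pos)).exists
  obtain ⟨ξ, hξ, hP'ξ⟩ := hPmono.exists_deriv_pos_of_lt hPd (sub_one_lt b)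
  set Q : ℝ → ℝ := fun y => N y ^ 2 * deriv P y
  have hQ (x : ℝ) := hasDerivAt_sq_mul_deriv (hP'd x) (hNd x) (hNpos x).ne' (heqP x)
  have hQanti : AntitoneOn Q (Iic ξ) := by
    refine antitoneOn_of_deriv_nonpos (convex_Iic ξ)
      (fun x _ => (hQ x).continuousAt.continuousWithinAt)
      (fun x _ => (hQ x).differentiableAt.differentiableWithinAt) fun x hx => ?_
    rw [interior_Iic] at hx
    have hPx : P x ≤ 1 := (hPmono (hx.trans hξ.2)).le.trans hb.le
    have hg := geneDrive_reaction_nonneg hs0 hs hr.le (hNle x) (hPnn x) hPx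
    rw [(hQ x).deriv]
    linarith [mul_nonneg hc (mul_nonneg (sq_nonneg (N x)) (hP' x)), mul_nonneg (sq_nonneg (N x)) hg]
  have hP'ge : ∀ x ≤ ξ, Q ξ ≤ deriv P x := fun x hx =>
    calc Q ξ ≤ Q x := hQanti hx self_mem_Iic hx
      _ ≤ deriv P x := mul_le_of_le_one_left (hP' x) (pow_le_one₀ (hNpos x).le (hNle x))
  exact not_tendsto_nhds_of_tendsto_atBot
    (tendsto_atBot_atBot_of_pos_le_deriv hPd (mul_pos (pow_pos (hNpos ξ) 2) hP'ξ) hP'ge) 0 hPlim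

/-- For `s ∈ [0, 1/2]`, a nontrivial traveling wave of the gene-drive
frequency system with strictly increasing `P` has speed `c < 0`. -/
theorem stmt6
    (s r c : ℝ) (hs0 : 0 ≤ s) (hs : s ≤ 1 / 2) (hr : 0 < r)
    (P N : ℝ → ℝ)
    (hP2 : ContDiff ℝ 2 P) (hN2 : ContDiff ℝ 2 N)
    (hNpos : ∀ x, 0 < N x)
    (hPbd : Bornology.IsBounded (Set.range P))
    (hNbd : Bornology.IsBounded (Set.range N))
    (hPnn : ∀ x, 0 ≤ P x)
    (hPmono : StrictMono P) (hNanti : StrictAnti N)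
    (hPlim : Filter.Tendsto P Filter.atBot (nhds 0))
    (hNlim : Filter.Tendsto N Filter.atBot (nhds 1))
    (heqP : ∀ x, -deriv (deriv P) x - c * deriv P x - 2 * (deriv N x / N x) * deriv P x
      = (r * (1 - N x) + 1) * P x * (1 - P x) * (s * P x - (2 * s - 1)))
    (heqN : ∀ x, -deriv (deriv N) x - c * deriv N x
      = N x * ((1 - s + s * (1 - P x) ^ 2) * (r * (1 - N x) + 1) - 1))
    (hnontriv : ∃ x, P x ≠ 0) :
    c < 0 :=
  stmt6_general s r c hs0 hs hr P N hP2 hN2 hNpos hPnn hPmono hNanti hPlim hNlim heqP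
end

section
/- Let s ∈ [1/2, 2/3], r > s/(1-s), c ∈ ℝ, and let (P, N) be a nontrivial traveling wave of the gene-drive frequency system with speed c such that P is strictly increasing and (P(x), N(x)) → (1, (1/r)(r - s/(1-s))) as x → +∞. If (1 - s/(r(1-s)))⁴·(2 - 3s) ≥ (r + 1 - (1 - s/(r(1-s)))⁴)·((2s-1)/s)³, then c < 0. -/
/-!
Suppose `c ≥ 0`. Multiplying the `P`-equation by `N ^ 4 P'` shows that the energy
`(N ^ 2 P') ^ 2 / 2` decreases at rate `c N ^ 4 P' ^ 2 + N ^ 4 (r (1 - N) + 1) q(P) P'`, where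
`q(p) = p (1 - p) (s p - (2 s - 1))` changes sign at `θ = (2 s - 1) / s`. As `N` decreases from `1`
to `A = 1 - s / (r (1 - s))`, the weight `N ^ 4 (r (1 - N) + 1)` stays in `[A ^ 4 (2 - A), r + 1]`.
Replacing it by `r + 1` where `q(P) ≤ 0` and by `A ^ 4 (2 - A)` where `q(P) ≥ 0` yields a potential
`K` with `K' = weight · q` such that `energy + K(P)` is nonincreasing. The energy is nonnegative and
frequently small at `-∞`, so `K(1) ≤ K(0) = 0`. But `K(1)` is an explicit polynomial in `s` and the
two weights; the hypothesis says it is `≥ 0` for the weights `A ^ 4, r + 1`, and the strictly larger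
`A ^ 4 (2 - A)` makes it positive.
-/

open Filter Set Topology

def selection (s p : ℝ) : ℝ := p * (1 - p) * (s * p - (2 * s - 1))

noncomputable def selectionPotential (s p : ℝ) : ℝ :=
  -(s * p ^ 4) / 4 + (3 * s - 1) * p ^ 3 / 3 - (2 * s - 1) * p ^ 2 / 2

theorem hasDerivAt_selectionPotential (s p : ℝ) :
    HasDerivAt (selectionPotential s) (selection s p) p := by
  have h : HasDerivAt (selectionPotential s)
      (-(s * (4 * p ^ 3)) / 4 + (3 * s - 1) * (3 * p ^ 2) / 3 - (2 * s - 1) * (2 * p ^ 1) / 2)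
      p := by
    unfold selectionPotential
    apply_rules [HasDerivAt.sub, HasDerivAt.add, HasDerivAt.div_const, HasDerivAt.neg,
      HasDerivAt.const_mul, hasDerivAt_pow]
  exact h.congr_deriv (by simp only [selection]; ring)

theorem continuous_selection (s : ℝ) : Continuous (selection s) := by
  unfold selection; fun_prop

def piecewiseSlope (α β y : ℝ) : ℝ := β * min y 0 + α * max y 0

theorem piecewiseSlope_of_nonpos (α β : ℝ) {y : ℝ} (hy : y ≤ 0) :
    piecewiseSlope α β y = β * y := by
  simp [piecewiseSlope, hy]

theorem piecewiseSlope_of_nonneg (α β : ℝ) {y : ℝ} (hy : 0 ≤ y) :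
    piecewiseSlope α β y = α * y := by
  simp [piecewiseSlope, hy]

theorem piecewiseSlope_le_mul {α β m : ℝ} (hα : α ≤ m) (hβ : m ≤ β) (y : ℝ) :
    piecewiseSlope α β y ≤ m * y := by
  rcases le_total y 0 with hy | hy
  · rw [piecewiseSlope_of_nonpos α β hy]; nlinarith
  · rw [piecewiseSlope_of_nonneg α β hy]; nlinarith

noncomputable def comparisonPotential (α β s p : ℝ) : ℝ :=
  ∫ t in (0)..p, piecewiseSlope α β (selection s t)

theorem continuous_piecewiseSlope_selection (α β s : ℝ) :
    Continuous fun t => piecewiseSlope α β (selection s t) := by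
  unfold piecewiseSlope; have := continuous_selection s; fun_prop

theorem hasDerivAt_comparisonPotential (α β s p : ℝ) :
    HasDerivAt (comparisonPotential α β s) (piecewiseSlope α β (selection s p)) p :=
  (continuous_piecewiseSlope_selection α β s).integral_hasStrictDerivAt 0 p |>.hasDerivAt

theorem comparisonPotential_zero (α β s : ℝ) : comparisonPotential α β s 0 = 0 :=
  intervalIntegral.integral_same

theorem integral_selection (s a b : ℝ) :
    ∫ t in a..b, selection s t = selectionPotential s b - selectionPotential s a :=
  intervalIntegral.integral_eq_sub_of_hasDerivAt (fun p _ => hasDerivAt_selectionPotential s p)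
    ((continuous_selection s).intervalIntegrable a b)

theorem comparisonPotential_one {α β s : ℝ} (hs0 : 1 / 2 ≤ s) (hs1 : s ≤ 1) :
    comparisonPotential α β s 1 = (α * (2 - 3 * s) - (β - α) * ((2 * s - 1) / s) ^ 3) / 12 := by
  have hs : 0 < s := by linarith
  set θ := (2 * s - 1) / s with hθ
  have hsθ : s * θ = 2 * s - 1 := by rw [hθ]; field_simp
  have hθ0 : 0 ≤ θ := div_nonneg (by linarith) hs.le
  have hθ1 : θ ≤ 1 := by rw [hθ, div_le_one hs]; linarith
  have hcont := continuous_piecewiseSlope_selection α β s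
  have hlow : ∫ t in (0)..θ, piecewiseSlope α β (selection s t)
      = β * (selectionPotential s θ - selectionPotential s 0) := by
    rw [← integral_selection, ← intervalIntegral.integral_const_mul]
    refine intervalIntegral.integral_congr fun t ht => piecewiseSlope_of_nonpos α β ?_
    rw [uIcc_of_le hθ0] at ht
    unfold selection
    exact mul_nonpos_of_nonneg_of_nonpos (mul_nonneg ht.1 (by linarith [ht.2]))
      (by nlinarith [ht.2])
  have hhigh : ∫ t in θ..1, piecewiseSlope α β (selection s t)
      = α * (selectionPotential s 1 - selectionPotential s θ) := by
    rw [← integral_selection, ← intervalIntegral.integral_const_mul]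
    refine intervalIntegral.integral_congr fun t ht => piecewiseSlope_of_nonneg α β ?_
    rw [uIcc_of_le hθ1] at ht
    unfold selection
    exact mul_nonneg (mul_nonneg (by linarith [ht.1]) (by linarith [ht.2])) (by nlinarith [ht.1])
  rw [comparisonPotential, ← intervalIntegral.integral_add_adjacent_intervals (b := θ)
    (hcont.intervalIntegrable _ _) (hcont.intervalIntegrable _ _), hlow, hhigh]
  simp only [selectionPotential]
  rw [hθ]
  field_simp
  ring

theorem comparisonPotential_one_pos {α α' β s : ℝ} (hs0 : 1 / 2 ≤ s) (hs1 : s < 1) (hα : α < α')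
    (h : (β - α) * ((2 * s - 1) / s) ^ 3 ≤ α * (2 - 3 * s)) :
    0 < comparisonPotential α' β s 1 := by
  have hs : 0 < s := by linarith
  have hgap : 0 < 2 - 3 * s + ((2 * s - 1) / s) ^ 3 := by
    have : 2 - 3 * s + ((2 * s - 1) / s) ^ 3 = (1 - s) ^ 3 * (3 * s - 1) / s ^ 3 := by
      field_simp; ring
    rw [this]
    have : 0 < 3 * s - 1 := by linarith
    have : 0 < 1 - s := by linarith
    positivity
  rw [comparisonPotential_one hs0 hs1.le]
  nlinarith [mul_pos (sub_pos.2 hα) hgap]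

theorem pow_four_mul_growth_mem_Icc {A n r : ℝ} (hA : 0 ≤ A) (hAn : A ≤ n) (hn : n ≤ 1)
    (hr : 1 ≤ r) : n ^ 4 * (r * (1 - n) + 1) ∈ Icc (A ^ 4 * (2 - A)) (r + 1) := by
  have hn0 : 0 ≤ n := hA.trans hAn
  have h4 : A ^ 4 ≤ n ^ 4 := pow_le_pow_left₀ hA hAn 4
  have h41 : n ^ 4 ≤ 1 := pow_le_one₀ hn0 hn
  constructor
  -- `n ^ 4 - A ^ 4 ≥ A ^ 4 (n - A)` and `r (1 - n) n ^ 4 ≥ (1 - n) A ^ 4` add up to `A ^ 4 (1 - A)`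
  · have hdiff : A ^ 4 * (n - A) ≤ n ^ 4 - A ^ 4 := by
      nlinarith [pow_le_pow_left₀ hA hAn 3, pow_le_one₀ hA (hAn.trans hn) (n := 3),
        mul_nonneg (pow_nonneg hA 3) (sub_nonneg.2 hAn)]
    nlinarith [mul_le_mul_of_nonneg_right h4 (sub_nonneg.2 hn),
      mul_le_mul_of_nonneg_left (sub_nonneg.2 hr)
        (mul_nonneg (sub_nonneg.2 hn) (pow_nonneg hn0 4))]
  · nlinarith [mul_le_mul_of_nonneg_left (sub_nonneg.2 hn) (by linarith : (0:ℝ) ≤ r),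
      mul_nonneg (sub_nonneg.2 h41) (by nlinarith : (0:ℝ) ≤ r * (1 - n) + 1)]

theorem hasDerivAt_energy {u v : ℝ → ℝ} {c F x : ℝ} (hu : DifferentiableAt ℝ (deriv u) x)
    (hv : DifferentiableAt ℝ v x) (hv0 : v x ≠ 0)
    (heq : -deriv (deriv u) x - c * deriv u x - 2 * (deriv v x / v x) * deriv u x = F) :
    HasDerivAt (fun y => (v y ^ 2 * deriv u y) ^ 2 / 2)
      (-(c * v x ^ 4 * deriv u x ^ 2) - v x ^ 4 * F * deriv u x) x := by
  have h := ((hv.hasDerivAt.pow 2).mul hu.hasDerivAt).pow 2 |>.div_const 2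
  refine h.congr_deriv ?_
  rw [← heq]
  simp only [Pi.mul_apply, Pi.pow_apply]
  field_simp
  ring

theorem antitone_energy_add_comparisonPotential {P N : ℝ → ℝ} {c r s α β : ℝ} (hc : 0 ≤ c)
    (hP : Differentiable ℝ P) (hP' : Differentiable ℝ (deriv P)) (hN : Differentiable ℝ N)
    (hN0 : ∀ x, N x ≠ 0) (hPmono : Monotone P)
    (hweight : ∀ x, N x ^ 4 * (r * (1 - N x) + 1) ∈ Icc α β)
    (heqP : ∀ x, -deriv (deriv P) x - c * deriv P x - 2 * (deriv N x / N x) * deriv P x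
      = (r * (1 - N x) + 1) * P x * (1 - P x) * (s * P x - (2 * s - 1))) :
    Antitone fun x => (N x ^ 2 * deriv P x) ^ 2 / 2 + comparisonPotential α β s (P x) := by
  have hW : ∀ x,
      HasDerivAt (fun x => (N x ^ 2 * deriv P x) ^ 2 / 2 + comparisonPotential α β s (P x))
      (-(c * N x ^ 4 * deriv P x ^ 2)
        - (N x ^ 4 * (r * (1 - N x) + 1) * selection s (P x)
          - piecewiseSlope α β (selection s (P x))) * deriv P x) x := fun x =>
    ((hasDerivAt_energy (hP' x) (hN x) (hN0 x) (heqP x)).add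
      ((hasDerivAt_comparisonPotential α β s (P x)).comp x (hP x).hasDerivAt)).congr_deriv
      (by simp only [selection]; ring)
  refine antitone_of_deriv_nonpos (fun x => (hW x).differentiableAt) fun x => ?_
  rw [(hW x).deriv]
  have hslope := piecewiseSlope_le_mul (hweight x).1 (hweight x).2 (selection s (P x))
  have hP'0 : 0 ≤ deriv P x := hPmono.deriv_nonneg
  have : 0 ≤ c * N x ^ 4 * deriv P x ^ 2 := by positivity
  nlinarith [mul_nonneg (sub_nonneg.2 hslope) hP'0]

theorem frequently_abs_deriv_lt_atBot {f : ℝ → ℝ} {p ε : ℝ} (hf : Differentiable ℝ f)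
    (hlim : Tendsto f atBot (𝓝 p)) (hε : 0 < ε) : ∃ᶠ x in atBot, |deriv f x| < ε := by
  obtain ⟨L, hL⟩ := eventually_atBot.1 (hlim.eventually (Metric.ball_mem_nhds p (half_pos hε)))
  refine frequently_atBot.2 fun M => ?_
  set b := min M L
  obtain ⟨ξ, hξ, hslope⟩ := exists_deriv_eq_slope f (sub_one_lt b) hf.continuous.continuousOn
    fun x _ => (hf x).differentiableWithinAt
  refine ⟨ξ, hξ.2.le.trans (min_le_left _ _), ?_⟩
  have hb := hL b (min_le_right _ _)
  have ha := hL (b - 1) ((sub_one_lt b).le.trans (min_le_right _ _))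
  rw [Real.dist_eq, abs_lt] at ha hb
  rw [hslope, sub_sub_cancel, div_one, abs_lt]
  constructor <;> linarith

theorem le_of_antitone_energy_add_comp {f E K : ℝ → ℝ} {p₀ p₁ : ℝ} (hf : Differentiable ℝ f)
    (hf₀ : Tendsto f atBot (𝓝 p₀)) (hf₁ : Tendsto f atTop (𝓝 p₁)) (hK : Continuous K)
    (hE₀ : ∀ x, 0 ≤ E x) (hE : ∀ x, E x ≤ deriv f x ^ 2)
    (hW : Antitone fun x => E x + K (f x)) : K p₁ ≤ K p₀ := by
  by_contra! hlt
  set δ := K p₁ - K p₀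
  have hW₁ : ∀ x, K p₁ ≤ E x + K (f x) := fun x =>
    le_of_tendsto ((hK.tendsto p₁).comp hf₁)
      ((eventually_ge_atTop x).mono fun y hy =>
        show K (f y) ≤ E x + K (f x) from (le_add_of_nonneg_left (hE₀ y)).trans (hW hy))
  have hK₀ : ∀ᶠ x in atBot, K (f x) < K p₀ + δ / 2 :=
    (hK.tendsto p₀).comp hf₀ |>.eventually (eventually_lt_nhds (by linarith))
  obtain ⟨x, hx, hKx⟩ := ((frequently_abs_deriv_lt_atBot hf hf₀
    (Real.sqrt_pos.2 (by linarith : 0 < δ / 2))).and_eventually hK₀).exists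
  have hderiv : deriv f x ^ 2 < δ / 2 :=
    calc deriv f x ^ 2 = |deriv f x| ^ 2 := (sq_abs _).symm
      _ < √(δ / 2) ^ 2 := pow_lt_pow_left₀ hx (abs_nonneg _) two_ne_zero
      _ = δ / 2 := Real.sq_sqrt (by linarith)
  linarith [hW₁ x, hE x]

theorem stmt7_general
    (s r c : ℝ) (hs0 : 1 / 2 ≤ s) (hs : s ≤ 2 / 3)
    (hr : s / (1 - s) < r)
    (P N : ℝ → ℝ)
    (hP2 : ContDiff ℝ 2 P) (hN2 : ContDiff ℝ 2 N)
    (hPmono : StrictMono P) (hNanti : StrictAnti N)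
    (hPlim : Filter.Tendsto P Filter.atBot (nhds 0))
    (hNlim : Filter.Tendsto N Filter.atBot (nhds 1))
    (hPlim' : Filter.Tendsto P Filter.atTop (nhds 1))
    (hNlim' : Filter.Tendsto N Filter.atTop (nhds ((1 / r) * (r - s / (1 - s)))))
    (heqP : ∀ x, -deriv (deriv P) x - c * deriv P x - 2 * (deriv N x / N x) * deriv P x
      = (r * (1 - N x) + 1) * P x * (1 - P x) * (s * P x - (2 * s - 1)))
    (hineq : (1 - s / (r * (1 - s))) ^ 4 * (2 - 3 * s)
      ≥ (r + 1 - (1 - s / (r * (1 - s))) ^ 4) * ((2 * s - 1) / s) ^ 3) :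
    c < 0 := by
  by_contra! hc
  have hs1 : s < 1 := by linarith
  have hr1 : 1 ≤ r := ((one_le_div (by linarith)).2 (by linarith)).trans hr.le
  set A := 1 - s / (r * (1 - s)) with hA
  have hA0 : 0 < A := by
    rw [hA, sub_pos, div_lt_one (by nlinarith)]
    rwa [div_lt_iff₀ (by linarith)] at hr
  have hA1 : A < 1 := by
    have : 0 < s / (r * (1 - s)) := div_pos (by linarith) (by nlinarith)
    linarith
  have hNA : ∀ x, A ≤ N x := hNanti.antitone.le_of_tendsto (by
    convert hNlim' using 2; rw [hA]; field_simp)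
  have hN1 : ∀ x, N x ≤ 1 := hNanti.antitone.ge_of_tendsto hNlim
  have hP := hP2.differentiable (by norm_num)
  have hW := antitone_energy_add_comparisonPotential (α := A ^ 4 * (2 - A)) (β := r + 1) hc
    hP ((hP2.deriv' (n := 1)).differentiable one_ne_zero) (hN2.differentiable (by norm_num))
    (fun x => (hA0.trans_le (hNA x)).ne') hPmono.monotone
    (fun x => pow_four_mul_growth_mem_Icc hA0.le (hNA x) (hN1 x) hr1) heqP
  have hE : ∀ x, (N x ^ 2 * deriv P x) ^ 2 / 2 ≤ deriv P x ^ 2 := fun x => by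
    have hN4 : (N x ^ 2) ^ 2 ≤ 1 :=
      pow_le_one₀ (by positivity) (pow_le_one₀ (hA0.le.trans (hNA x)) (hN1 x))
    rw [mul_pow]
    nlinarith [sq_nonneg (deriv P x)]
  have hK_le := le_of_antitone_energy_add_comp hP hPlim hPlim'
    (Differentiable.continuous fun p => (hasDerivAt_comparisonPotential _ _ s p).differentiableAt)
    (fun x => by positivity) hE hW
  have hK_pos : 0 < comparisonPotential (A ^ 4 * (2 - A)) (r + 1) s 1 :=
    comparisonPotential_one_pos (α := A ^ 4) hs0 hs1 (by nlinarith [pow_pos hA0 4]) (by linarith)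
  rw [comparisonPotential_zero] at hK_le
  linarith

/-- For `s ∈ [1/2, 2/3]`, `r > s/(1-s)`, and a nontrivial traveling wave
of the gene-drive frequency system with strictly increasing `P` converging at `+∞`
to `(1, (1/r)(r - s/(1-s)))`: if
`(1 - s/(r(1-s)))⁴ (2-3s) ≥ (r + 1 - (1 - s/(r(1-s)))⁴) ((2s-1)/s)³`, then `c < 0`. -/
theorem stmt7
    (s r c : ℝ) (hs0 : 1 / 2 ≤ s) (hs : s ≤ 2 / 3)
    (hr0 : 0 < r) (hr : s / (1 - s) < r)
    (P N : ℝ → ℝ)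
    (hP2 : ContDiff ℝ 2 P) (hN2 : ContDiff ℝ 2 N)
    (hNpos : ∀ x, 0 < N x)
    (hPbd : Bornology.IsBounded (Set.range P))
    (hNbd : Bornology.IsBounded (Set.range N))
    (hPnn : ∀ x, 0 ≤ P x)
    (hPmono : StrictMono P) (hNanti : StrictAnti N)
    (hPlim : Filter.Tendsto P Filter.atBot (nhds 0))
    (hNlim : Filter.Tendsto N Filter.atBot (nhds 1))
    (hPlim' : Filter.Tendsto P Filter.atTop (nhds 1))
    (hNlim' : Filter.Tendsto N Filter.atTop (nhds ((1 / r) * (r - s / (1 - s)))))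
    (heqP : ∀ x, -deriv (deriv P) x - c * deriv P x - 2 * (deriv N x / N x) * deriv P x
      = (r * (1 - N x) + 1) * P x * (1 - P x) * (s * P x - (2 * s - 1)))
    (heqN : ∀ x, -deriv (deriv N) x - c * deriv N x
      = N x * ((1 - s + s * (1 - P x) ^ 2) * (r * (1 - N x) + 1) - 1))
    (hnontriv : ∃ x, P x ≠ 0)
    (hineq : (1 - s / (r * (1 - s))) ^ 4 * (2 - 3 * s)
      ≥ (r + 1 - (1 - s / (r * (1 - s))) ^ 4) * ((2 * s - 1) / s) ^ 3) :
    c < 0 :=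
  stmt7_general s r c hs0 hs hr P N hP2 hN2 hPmono hNanti hPlim hNlim hPlim' hNlim' heqP hineq
end

section
/- Let s ∈ (1/2, 1), r > 0, c ∈ ℝ, and let (P, N) be a traveling wave of the gene-drive frequency system with speed c such that P(x) → (2s-1)/s as x → +∞. Then the wave is nontrivial and necessarily c > 0. -/
/-!
Suppose `c ≤ 0`. The weight `N²` makes the transport part of the `P`-equation exact:
`(N² P')' = N² (P'' + 2 (N'/N) P') = N² (-c P' - f(P, N))`, and the reaction `f` is
nonpositive while `0 ≤ P ≤ (2s-1)/s` and `N ≤ 1`. So `N² P'` is nondecreasing; as `N`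
decreases, a positive value of `P'` would persist to the right and make `P` unbounded.
Hence `P' ≡ 0`, which is impossible since `P` has different limits `0` and `(2s-1)/s`.
-/

open Set

theorem not_bddAbove_range_of_le_deriv {f : ℝ → ℝ} (hf : Differentiable ℝ f) {δ x₀ : ℝ}
    (hδ : 0 < δ) (hf' : ∀ x, x₀ ≤ x → δ ≤ deriv f x) : ¬ BddAbove (range f) := by
  rintro ⟨M, hM⟩
  have hfx₀ : f x₀ ≤ M := hM (mem_range_self x₀)
  set y := x₀ + (M - f x₀ + 1) / δ
  have hx₀y : x₀ ≤ y := le_add_of_nonneg_right (div_nonneg (by linarith) hδ.le)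
  have hgrowth : δ * (y - x₀) ≤ f y - f x₀ :=
    (convex_Ici x₀).mul_sub_le_image_sub_of_le_deriv hf.continuous.continuousOn
      hf.differentiableOn (fun x hx => hf' x (interior_subset hx)) x₀ self_mem_Ici y hx₀y hx₀y
  have hδy : δ * (y - x₀) = M - f x₀ + 1 := by
    simp only [y, add_sub_cancel_left]
    field_simp
  linarith [hM (mem_range_self y)]

theorem deriv_nonpos_of_monotone_mul_deriv {f w : ℝ → ℝ} (hf : Differentiable ℝ f)
    (hfb : BddAbove (range f)) (hw : ∀ x, 0 < w x) (hw' : Antitone w)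
    (hwf : Monotone fun x => w x * deriv f x) (x : ℝ) : deriv f x ≤ 0 := by
  by_contra! hpos
  refine not_bddAbove_range_of_le_deriv (x₀ := x) hf hpos (fun y hxy => ?_) hfb
  have hmul : w x * deriv f x ≤ w y * deriv f y := hwf hxy
  have hwy : w y ≤ w x := hw' hxy
  nlinarith [hw y]

theorem hasDerivAt_sq_mul {N g : ℝ → ℝ} {x : ℝ} (hN : DifferentiableAt ℝ N x) (hN0 : N x ≠ 0)
    (hg : DifferentiableAt ℝ g x) :
    HasDerivAt (fun y => N y ^ 2 * g y)
      (N x ^ 2 * (deriv g x + 2 * (deriv N x / N x) * g x)) x := by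
  refine ((hN.hasDerivAt.pow 2).mul hg.hasDerivAt).congr_deriv ?_
  rw [Pi.pow_apply]
  field_simp
  ring

theorem gene_drive_reaction_nonpos {s r p n : ℝ} (hr : 0 ≤ r) (hn : n ≤ 1) (hp0 : 0 ≤ p)
    (hp1 : p ≤ 1) (hps : s * p ≤ 2 * s - 1) :
    (r * (1 - n) + 1) * p * (1 - p) * (s * p - (2 * s - 1)) ≤ 0 := by
  have hgrowth : 0 ≤ (r * (1 - n) + 1) * p * (1 - p) := by
    have : 0 ≤ r * (1 - n) := mul_nonneg hr (by linarith)
    have : 0 ≤ 1 - p := by linarith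
    positivity
  exact mul_nonpos_of_nonneg_of_nonpos hgrowth (by linarith)

theorem stmt9_general
    (s r c : ℝ) (hs0 : 1 / 2 < s) (hs1 : s < 1) (hr : 0 < r)
    (P N : ℝ → ℝ)
    (hP2 : ContDiff ℝ 2 P) (hN2 : ContDiff ℝ 2 N)
    (hNpos : ∀ x, 0 < N x)
    (hPnn : ∀ x, 0 ≤ P x)
    (hPmono : Monotone P) (hNanti : StrictAnti N)
    (hPlim : Filter.Tendsto P Filter.atBot (nhds 0))
    (hNlim : Filter.Tendsto N Filter.atBot (nhds 1))
    (hPlim' : Filter.Tendsto P Filter.atTop (nhds ((2 * s - 1) / s)))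
    (heqP : ∀ x, -deriv (deriv P) x - c * deriv P x - 2 * (deriv N x / N x) * deriv P x
      = (r * (1 - N x) + 1) * P x * (1 - P x) * (s * P x - (2 * s - 1))) :
    (∃ x, P x ≠ 0) ∧ 0 < c := by
  have hs : 0 < s := by linarith
  have hθ : 0 < (2 * s - 1) / s := div_pos (by linarith) hs
  constructor
  · by_contra! hP0
    rw [funext hP0, tendsto_const_nhds_iff] at hPlim'
    exact hθ.ne hPlim'
  by_contra! hc
  have hPdiff : Differentiable ℝ P := hP2.differentiable (by norm_num)
  have hP'diff : Differentiable ℝ (deriv P) :=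
    ((contDiff_succ_iff_deriv (n := 1)).mp hP2).2.2.differentiable (by norm_num)
  have hPle (x : ℝ) : P x ≤ (2 * s - 1) / s := hPmono.ge_of_tendsto hPlim' x
  have hNle (x : ℝ) : N x ≤ 1 := hNanti.antitone.ge_of_tendsto hNlim x
  have hflux : Monotone fun x => N x ^ 2 * deriv P x := by
    refine monotone_of_hasDerivAt_nonneg
      (fun x => hasDerivAt_sq_mul (hN2.differentiable (by norm_num) x) (hNpos x).ne'
        (hP'diff x)) (fun x => mul_nonneg (sq_nonneg _) ?_)
    have hsP : s * P x ≤ 2 * s - 1 := (le_div_iff₀' hs).mp (hPle x)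
    have hP1 : P x ≤ 1 := (hPle x).trans ((div_le_one hs).2 (by linarith))
    have hreact := gene_drive_reaction_nonpos hr.le (hNle x) (hPnn x) hP1 hsP
    have hdrift : c * deriv P x ≤ 0 := mul_nonpos_of_nonpos_of_nonneg hc hPmono.deriv_nonneg
    linarith [heqP x]
  have hP'zero (x : ℝ) : deriv P x = 0 :=
    le_antisymm
      (deriv_nonpos_of_monotone_mul_deriv hPdiff ⟨_, forall_mem_range.2 hPle⟩
        (fun x => pow_pos (hNpos x) 2)
        (fun x y hxy => pow_le_pow_left₀ (hNpos y).le (hNanti.antitone hxy) 2) hflux x)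
      hPmono.deriv_nonneg
  have hPconst : P = fun _ => P 0 := funext fun x => is_const_of_deriv_eq_zero hPdiff hP'zero x 0
  rw [hPconst, tendsto_const_nhds_iff] at hPlim hPlim'
  exact hθ.ne (hPlim ▸ hPlim')

/-- For `s ∈ (1/2, 1)`, a traveling wave of the gene-drive frequency
system with `P(x) → (2s-1)/s` as `x → +∞` is nontrivial and has speed `c > 0`. -/
theorem stmt9
    (s r c : ℝ) (hs0 : 1 / 2 < s) (hs1 : s < 1) (hr : 0 < r)
    (P N : ℝ → ℝ)
    (hP2 : ContDiff ℝ 2 P) (hN2 : ContDiff ℝ 2 N)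
    (hNpos : ∀ x, 0 < N x)
    (hPbd : Bornology.IsBounded (Set.range P))
    (hNbd : Bornology.IsBounded (Set.range N))
    (hPnn : ∀ x, 0 ≤ P x)
    (hPmono : Monotone P) (hNanti : StrictAnti N)
    (hPlim : Filter.Tendsto P Filter.atBot (nhds 0))
    (hNlim : Filter.Tendsto N Filter.atBot (nhds 1))
    (hPlim' : Filter.Tendsto P Filter.atTop (nhds ((2 * s - 1) / s)))
    (heqP : ∀ x, -deriv (deriv P) x - c * deriv P x - 2 * (deriv N x / N x) * deriv P x
      = (r * (1 - N x) + 1) * P x * (1 - P x) * (s * P x - (2 * s - 1)))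
    (heqN : ∀ x, -deriv (deriv N) x - c * deriv N x
      = N x * ((1 - s + s * (1 - P x) ^ 2) * (r * (1 - N x) + 1) - 1)) :
    (∃ x, P x ≠ 0) ∧ 0 < c :=
  stmt9_general s r c hs0 hs1 hr P N hP2 hN2 hNpos hPnn hPmono hNanti hPlim hNlim hPlim' heqP
end

section
/- Let s ∈ (2/3, 1), r > 0, c ∈ ℝ, and let (P, N) be a traveling wave of the gene-drive frequency system with speed c such that P(x) → 1 as x → +∞. If r·((2s-1)³ - s³(3s-2)) < s³(3s-2) (equivalently r < s³(3s-2)/((2s-1)³ - s³(3s-2)) when the denominator is positive), then c > 0. -/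
/-!
Suppose `c ≤ 0`. Multiplying the `P`-equation by `N² P'` shows that the energy `N² P'² / 2`
plus `κ F(P)` is nondecreasing wherever `(κ - N²(r(1-N)+1)) f(P) ≥ 0`, where `f` is the
bistable reaction term and `F` its primitive; the drift terms only help because `c ≤ 0` and
`N' ≤ 0`. Let `x₀` be the point where `P` crosses the threshold `θ = (2s-1)/s` of `f` and
`m = N(x₀)`. Left of `x₀` we have `f(P) ≤ 0` and take `κ = m²`, right of `x₀` we have
`f(P) ≥ 0` and take `κ = m²(r+1)`. Chaining the two monotonicity statements from `-∞` to
`x ≥ x₀` gives `N² P'² / 2 ≥ -m² ((r+1) F(1) - r F(θ)) > 0` on `[x₀, ∞)`, the sign being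
exactly the hypothesis on `r`. So `P'` is bounded below by a positive constant there,
contradicting `P → 1`.
-/

open Filter Set

theorem tendsto_atTop_of_le_deriv {f : ℝ → ℝ} (hf : Differentiable ℝ f) {σ x₀ : ℝ}
    (hσ : 0 < σ) (h : ∀ x, x₀ ≤ x → σ ≤ deriv f x) : Tendsto f atTop atTop := by
  have hgrowth := (convex_Ici x₀).mul_sub_le_image_sub_of_le_deriv hf.continuous.continuousOn
    hf.differentiableOn (fun x hx => h x (interior_subset hx))
  refine tendsto_atTop_mono' _ ((eventually_ge_atTop x₀).mono fun x hx => ?_)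
    (tendsto_atTop_add_const_right _ (f x₀ - x₀ * σ) (tendsto_id.atTop_mul_const hσ))
  have := hgrowth x₀ self_mem_Ici x hx hx
  simp only [id]
  linarith

noncomputable section

namespace GeneDriveWave

def reaction (s p : ℝ) : ℝ := p * (1 - p) * (s * p - (2 * s - 1))

def potential (s p : ℝ) : ℝ :=
  -s / 4 * p ^ 4 + (3 * s - 1) / 3 * p ^ 3 - (2 * s - 1) / 2 * p ^ 2

def threshold (s : ℝ) : ℝ := (2 * s - 1) / s

def weight (r n : ℝ) : ℝ := n ^ 2 * (r * (1 - n) + 1)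

/-- `N²` is an integrating factor for the drift `-2 (N'/N) P'` of the `P`-equation. -/
def energy (P N : ℝ → ℝ) (x : ℝ) : ℝ := N x ^ 2 * deriv P x ^ 2 / 2

theorem hasDerivAt_potential (s p : ℝ) : HasDerivAt (potential s) (reaction s p) p := by
  have h := (((hasDerivAt_pow 4 p).const_mul (-s / 4)).add
    ((hasDerivAt_pow 3 p).const_mul ((3 * s - 1) / 3))).sub
    ((hasDerivAt_pow 2 p).const_mul ((2 * s - 1) / 2))
  exact h.congr_deriv (by unfold reaction; ring)

theorem potential_zero (s : ℝ) : potential s 0 = 0 := by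
  simp [potential]

theorem threshold_pos {s : ℝ} (hs : 1 / 2 < s) : 0 < threshold s :=
  div_pos (by linarith) (by linarith)

theorem threshold_lt_one {s : ℝ} (hs0 : 0 < s) (hs1 : s < 1) : threshold s < 1 :=
  (div_lt_one hs0).2 (by linarith)

theorem reaction_nonpos {s p : ℝ} (hs : 0 < s) (hp0 : 0 ≤ p) (hp1 : p ≤ 1)
    (hp : p ≤ threshold s) : reaction s p ≤ 0 := by
  rw [threshold, le_div_iff₀ hs] at hp
  exact mul_nonpos_of_nonneg_of_nonpos (mul_nonneg hp0 (by linarith)) (by linarith)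

theorem reaction_nonneg {s p : ℝ} (hs : 0 < s) (hp0 : 0 ≤ p) (hp1 : p ≤ 1)
    (hp : threshold s ≤ p) : 0 ≤ reaction s p := by
  rw [threshold, div_le_iff₀ hs] at hp
  exact mul_nonneg (mul_nonneg hp0 (by linarith)) (by linarith)

theorem potential_le_potential_one {s p : ℝ} (hs : 0 < s) (hp0 : 0 ≤ p) (hp1 : p ≤ 1)
    (hp : threshold s ≤ p) : potential s p ≤ potential s 1 := by
  have hmono : MonotoneOn (potential s) (Icc p 1) :=
    monotoneOn_of_hasDerivWithinAt_nonneg (convex_Icc p 1)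
      (fun q _ => (hasDerivAt_potential s q).continuousAt.continuousWithinAt)
      (fun q _ => (hasDerivAt_potential s q).hasDerivWithinAt)
      (fun q hq => by
        rw [interior_Icc] at hq
        exact reaction_nonneg hs (by linarith [hq.1]) hq.2.le (hp.trans hq.1.le))
  exact hmono (left_mem_Icc.2 hp1) (right_mem_Icc.2 hp1) hp1

theorem potential_combination_neg {s r : ℝ} (hs : 0 < s)
    (hineq : r * ((2 * s - 1) ^ 3 - s ^ 3 * (3 * s - 2)) < s ^ 3 * (3 * s - 2)) :
    (r + 1) * potential s 1 - r * potential s (threshold s) < 0 := by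
  have h12 : 12 * s ^ 3 * ((r + 1) * potential s 1 - r * potential s (threshold s))
      = r * ((2 * s - 1) ^ 3 - s ^ 3 * (3 * s - 2)) - s ^ 3 * (3 * s - 2) := by
    simp only [potential, threshold]
    field_simp
    ring
  have hs3 : 0 < 12 * s ^ 3 := by positivity
  nlinarith

theorem sq_le_weight {r m n : ℝ} (hr : 0 ≤ r) (hm : 0 ≤ m) (hmn : m ≤ n) (hn : n ≤ 1) :
    m ^ 2 ≤ weight r n := by
  have h1 : m ^ 2 ≤ n ^ 2 := pow_le_pow_left₀ hm hmn 2
  have h2 : 1 ≤ r * (1 - n) + 1 := by nlinarith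
  unfold weight
  nlinarith [sq_nonneg n]

theorem weight_le {r m n : ℝ} (hr : 0 ≤ r) (hn : 0 ≤ n) (hnm : n ≤ m) :
    weight r n ≤ m ^ 2 * (r + 1) := by
  have h1 : n ^ 2 ≤ m ^ 2 := pow_le_pow_left₀ hn hnm 2
  have h2 : r * (1 - n) + 1 ≤ r + 1 := by nlinarith
  unfold weight
  nlinarith [sq_nonneg n]

section Wave

variable {s r c : ℝ} {P N : ℝ → ℝ}

theorem hasDerivAt_energy (hP : ContDiff ℝ 2 P) (hN : Differentiable ℝ N) (x : ℝ) :
    HasDerivAt (energy P N)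
      (N x * deriv N x * deriv P x ^ 2 + N x ^ 2 * deriv P x * deriv (deriv P) x) x := by
  have hP' : Differentiable ℝ (deriv P) :=
    (hP.iterate_deriv' 1 1).differentiable one_ne_zero
  have h := (((hN x).hasDerivAt.pow 2).mul ((hP' x).hasDerivAt.pow 2)).div_const 2
  exact h.congr_deriv (by simp only [Pi.pow_apply]; push_cast; ring)

theorem monotoneOn_energy_add_potential (hc : c ≤ 0) (hP : ContDiff ℝ 2 P)
    (hN : Differentiable ℝ N) (hNpos : ∀ x, 0 < N x) (hPmono : Monotone P) (hNanti : Antitone N)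
    (heqP : ∀ x, -deriv (deriv P) x - c * deriv P x - 2 * (deriv N x / N x) * deriv P x
      = (r * (1 - N x) + 1) * P x * (1 - P x) * (s * P x - (2 * s - 1)))
    {D : Set ℝ} (hD : Convex ℝ D) {κ : ℝ}
    (hκ : ∀ x ∈ D, 0 ≤ (κ - weight r (N x)) * reaction s (P x)) :
    MonotoneOn (fun x => energy P N x + κ * potential s (P x)) D := by
  have hPdiff : Differentiable ℝ P := hP.differentiable two_ne_zero
  have hderiv x : HasDerivAt (fun x => energy P N x + κ * potential s (P x))
      (N x * deriv N x * deriv P x ^ 2 + N x ^ 2 * deriv P x * deriv (deriv P) x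
        + κ * (reaction s (P x) * deriv P x)) x :=
    (hasDerivAt_energy hP hN x).add
      (((hasDerivAt_potential s (P x)).comp x (hPdiff x).hasDerivAt).const_mul κ)
  refine monotoneOn_of_hasDerivWithinAt_nonneg hD
    (fun x _ => (hderiv x).continuousAt.continuousWithinAt)
    (fun x _ => (hderiv x).hasDerivWithinAt) (fun x hx => ?_)
  -- substituting `P''` from the equation leaves `-N N' P'² - c N² P'² + (κ - weight) f(P) P'`
  have hNx := hNpos x
  have hP'' : N x ^ 2 * deriv (deriv P) x = -c * N x ^ 2 * deriv P x
      - 2 * N x * deriv N x * deriv P x - weight r (N x) * reaction s (P x) := by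
    have h := heqP x
    field_simp at h
    simp only [weight, reaction]
    linear_combination (-(N x)) * h
  have hP' : 0 ≤ deriv P x := hPmono.deriv_nonneg
  have hN' : deriv N x ≤ 0 := hNanti.deriv_nonpos
  have hdrift : 0 ≤ -(N x * deriv N x * deriv P x ^ 2) - c * (N x * deriv P x) ^ 2 := by
    have := mul_nonneg (mul_nonneg hNx.le (neg_nonneg.2 hN')) (sq_nonneg (deriv P x))
    nlinarith [sq_nonneg (N x * deriv P x)]
  have hreact := mul_nonneg (hκ x (interior_subset hx)) hP'
  linear_combination hdrift + hreact - deriv P x * hP''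

theorem neg_mul_le_energy (hc : c ≤ 0) (hs : 0 < s) (hr : 0 ≤ r) (hP : ContDiff ℝ 2 P)
    (hN : Differentiable ℝ N) (hNpos : ∀ x, 0 < N x) (hN1 : ∀ x, N x ≤ 1)
    (hP0 : ∀ x, 0 ≤ P x) (hP1 : ∀ x, P x ≤ 1) (hPmono : Monotone P) (hNanti : Antitone N)
    (hPlim : Tendsto P atBot (nhds 0))
    (heqP : ∀ x, -deriv (deriv P) x - c * deriv P x - 2 * (deriv N x / N x) * deriv P x
      = (r * (1 - N x) + 1) * P x * (1 - P x) * (s * P x - (2 * s - 1)))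
    {x₀ : ℝ} (hx₀ : P x₀ = threshold s) {b : ℝ} (hb : x₀ ≤ b) :
    -(N x₀ ^ 2 * ((r + 1) * potential s 1 - r * potential s (threshold s))) ≤ energy P N b := by
  set m := N x₀
  set K := (r + 1) * potential s 1 - r * potential s (threshold s)
  have hm : 0 ≤ m := (hNpos x₀).le
  have hleft : MonotoneOn (fun x => energy P N x + m ^ 2 * potential s (P x)) (Iic x₀) :=
    monotoneOn_energy_add_potential hc hP hN hNpos hPmono hNanti heqP (convex_Iic x₀)
      fun x hx => mul_nonneg_of_nonpos_of_nonpos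
        (sub_nonpos.2 (sq_le_weight hr hm (hNanti hx) (hN1 x)))
        (reaction_nonpos hs (hP0 x) (hP1 x) (hx₀ ▸ hPmono hx))
  have hright : MonotoneOn (fun x => energy P N x + m ^ 2 * (r + 1) * potential s (P x))
      (Ici x₀) :=
    monotoneOn_energy_add_potential hc hP hN hNpos hPmono hNanti heqP (convex_Ici x₀)
      fun x hx => mul_nonneg (sub_nonneg.2 (weight_le hr (hNpos x).le (hNanti hx)))
        (reaction_nonneg hs (hP0 x) (hP1 x) (hx₀ ▸ hPmono hx))
  have hb' := hright self_mem_Ici hb hb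
  have hPb := mul_le_mul_of_nonneg_left
    (potential_le_potential_one hs (hP0 b) (hP1 b) (hx₀ ▸ hPmono hb))
    (by positivity : 0 ≤ m ^ 2 * (r + 1))
  have hbound : ∀ a ≤ x₀, m ^ 2 * potential s (P a) ≤ energy P N b + m ^ 2 * K := by
    intro a ha
    have ha' := hleft ha self_mem_Iic ha
    have hEa : 0 ≤ energy P N a := by unfold energy; positivity
    simp only [hx₀] at ha' hb'
    linarith
  have hlim : Tendsto (fun a => m ^ 2 * potential s (P a)) atBot (nhds 0) := by
    simpa [potential_zero] using
      ((hasDerivAt_potential s 0).continuousAt.tendsto.comp hPlim).const_mul (m ^ 2)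
  linarith [le_of_tendsto hlim (eventually_atBot.2 ⟨x₀, hbound⟩)]

theorem sqrt_le_deriv_of_le_energy {ε b : ℝ} (hNb : 0 < N b) (hN1 : N b ≤ 1)
    (hP' : 0 ≤ deriv P b) (hε : ε ≤ energy P N b) : √(2 * ε) ≤ deriv P b := by
  rw [Real.sqrt_le_left hP']
  have : N b ^ 2 * deriv P b ^ 2 ≤ deriv P b ^ 2 :=
    mul_le_of_le_one_left (sq_nonneg _) (pow_le_one₀ hNb.le hN1)
  unfold energy at hε
  linarith

end Wave

end GeneDriveWave

end

open GeneDriveWave in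
theorem stmt10_general
    (s r c : ℝ) (hs0 : 2 / 3 < s) (hs1 : s < 1) (hr : 0 < r)
    (P N : ℝ → ℝ)
    (hP2 : ContDiff ℝ 2 P) (hN2 : ContDiff ℝ 2 N)
    (hNpos : ∀ x, 0 < N x)
    (hPnn : ∀ x, 0 ≤ P x)
    (hPmono : Monotone P) (hNanti : StrictAnti N)
    (hPlim : Filter.Tendsto P Filter.atBot (nhds 0))
    (hNlim : Filter.Tendsto N Filter.atBot (nhds 1))
    (hPlim' : Filter.Tendsto P Filter.atTop (nhds 1))
    (heqP : ∀ x, -deriv (deriv P) x - c * deriv P x - 2 * (deriv N x / N x) * deriv P x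
      = (r * (1 - N x) + 1) * P x * (1 - P x) * (s * P x - (2 * s - 1)))
    (hineq : r * ((2 * s - 1) ^ 3 - s ^ 3 * (3 * s - 2)) < s ^ 3 * (3 * s - 2)) :
    0 < c := by
  by_contra! hc
  have hs : 0 < s := by linarith
  have hP1 : ∀ x, P x ≤ 1 := hPmono.ge_of_tendsto hPlim'
  have hN1 : ∀ x, N x ≤ 1 := hNanti.antitone.ge_of_tendsto hNlim
  obtain ⟨x₀, hx₀⟩ : threshold s ∈ range P :=
    mem_range_of_exists_le_of_exists_ge hP2.continuous
      (hPlim.eventually_le_const (threshold_pos (by linarith))).exists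
      (hPlim'.eventually_const_le (threshold_lt_one hs hs1)).exists
  set ε := -(N x₀ ^ 2 * ((r + 1) * potential s 1 - r * potential s (threshold s)))
  have hε : 0 < ε := neg_pos.2 <|
    mul_neg_of_pos_of_neg (pow_pos (hNpos x₀) 2) (potential_combination_neg hs hineq)
  have hσ : ∀ b, x₀ ≤ b → √(2 * ε) ≤ deriv P b := fun b hb =>
    sqrt_le_deriv_of_le_energy (hNpos b) (hN1 b) hPmono.deriv_nonneg
      (neg_mul_le_energy hc hs hr.le hP2 (hN2.differentiable two_ne_zero) hNpos hN1 hPnn hP1 hPmono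
        hNanti.antitone hPlim heqP hx₀ hb)
  exact not_tendsto_nhds_of_tendsto_atTop (tendsto_atTop_of_le_deriv
    (hP2.differentiable two_ne_zero) (by positivity) hσ) 1 hPlim'

/-- For `s ∈ (2/3, 1)`, a traveling wave of the gene-drive frequency
system with `P(x) → 1` as `x → +∞` and `r ((2s-1)³ - s³(3s-2)) < s³(3s-2)` has
speed `c > 0`. -/
theorem stmt10
    (s r c : ℝ) (hs0 : 2 / 3 < s) (hs1 : s < 1) (hr : 0 < r)
    (P N : ℝ → ℝ)
    (hP2 : ContDiff ℝ 2 P) (hN2 : ContDiff ℝ 2 N)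
    (hNpos : ∀ x, 0 < N x)
    (hPbd : Bornology.IsBounded (Set.range P))
    (hNbd : Bornology.IsBounded (Set.range N))
    (hPnn : ∀ x, 0 ≤ P x)
    (hPmono : Monotone P) (hNanti : StrictAnti N)
    (hPlim : Filter.Tendsto P Filter.atBot (nhds 0))
    (hNlim : Filter.Tendsto N Filter.atBot (nhds 1))
    (hPlim' : Filter.Tendsto P Filter.atTop (nhds 1))
    (heqP : ∀ x, -deriv (deriv P) x - c * deriv P x - 2 * (deriv N x / N x) * deriv P x
      = (r * (1 - N x) + 1) * P x * (1 - P x) * (s * P x - (2 * s - 1)))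
    (heqN : ∀ x, -deriv (deriv N) x - c * deriv N x
      = N x * ((1 - s + s * (1 - P x) ^ 2) * (r * (1 - N x) + 1) - 1))
    (hineq : r * ((2 * s - 1) ^ 3 - s ^ 3 * (3 * s - 2)) < s ^ 3 * (3 * s - 2)) :
    0 < c :=
  stmt10_general s r c hs0 hs1 hr P N hP2 hN2 hNpos hPnn hPmono hNanti hPlim hNlim hPlim' heqP hineq
end

section
/- Let s ∈ [0,1) and let B, D : ℝ → ℝ be continuous functions. Let n_D, n_O : (0,∞) × ℝ → ℝ be positive functions, C¹ in t and C² in x, satisfying ∂_t n_D - ∂_xx n_D = n_D·((1-s)·(1 + n_O/(n_D+n_O))·B(n_D+n_O) - D(n_D+n_O)) and ∂_t n_O - ∂_xx n_O = n_O·((n_O/(n_D+n_O))·B(n_D+n_O) - D(n_D+n_O)). Define n = n_D + n_O and p = n_D/n. Then (p, n) satisfies ∂_t p - ∂_xx p - 2·(∂_x n / n)·∂_x p = B(n)·p(1-p)·(s·p - (2s-1)) and ∂_t n - ∂_xx n = n·((1 - s + s(1-p)²)·B(n) - D(n)) on (0,∞) × ℝ. -/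
/-!
Writing `n_D = p n` and expanding `∂ₜ - ∂ₓₓ` of the product gives
`(∂ₜ - ∂ₓₓ) n_D = n ((∂ₜ - ∂ₓₓ) p - 2 (∂ₓ n / n) ∂ₓ p) + p (∂ₜ - ∂ₓₓ) n`,
so the left-hand side of the `p`-equation is `((∂ₜ - ∂ₓₓ) n_D - p (∂ₜ - ∂ₓₓ) n) / n`, while
`(∂ₜ - ∂ₓₓ) n` is the sum of the two equations. Substituting the reaction terms leaves an
identity of rational functions of `n_D`, `n_O`, `B(n)`, `D(n)`.
-/

theorem deriv_deriv_add_of_contDiff {f g : ℝ → ℝ} (hf : ContDiff ℝ 2 f) (hg : ContDiff ℝ 2 g)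
    (x : ℝ) : deriv (deriv (f + g)) x = deriv (deriv f) x + deriv (deriv g) x := by
  simpa only [iteratedDeriv_succ, iteratedDeriv_zero] using
    iteratedDeriv_add (n := 2) (x := x) hf.contDiffAt hg.contDiffAt

theorem deriv_deriv_mul_of_contDiff {f g : ℝ → ℝ} (hf : ContDiff ℝ 2 f) (hg : ContDiff ℝ 2 g)
    (x : ℝ) : deriv (deriv (f * g)) x
      = deriv (deriv f) x * g x + 2 * (deriv f x * deriv g x) + f x * deriv (deriv g) x := by
  have h := iteratedDeriv_mul (n := 2) (x := x) hf.contDiffAt hg.contDiffAt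
  simp only [Finset.sum_range_succ, Finset.sum_range_zero, iteratedDeriv_succ,
    iteratedDeriv_zero] at h
  rw [h]
  norm_num
  ring

theorem deriv_deriv_div_add_drift {u m : ℝ → ℝ} (hu : ContDiff ℝ 2 u) (hm : ContDiff ℝ 2 m)
    (hm0 : ∀ y, m y ≠ 0) (x : ℝ) :
    deriv (deriv (fun y => u y / m y)) x
        + 2 * (deriv m x / m x) * deriv (fun y => u y / m y) x
      = (deriv (deriv u) x - u x / m x * deriv (deriv m) x) / m x := by
  set p : ℝ → ℝ := fun y => u y / m y
  have hu_eq : u = p * m := funext fun y => (div_mul_cancel₀ (u y) (hm0 y)).symm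
  have hp : ContDiff ℝ 2 p := hu.div hm hm0
  rw [hu_eq, deriv_deriv_mul_of_contDiff hp hm, Pi.mul_apply]
  field_simp [hm0 x]
  ring

theorem deriv_div_eq_of_hasDerivAt {u m : ℝ → ℝ} {u' m' t : ℝ} (hu : HasDerivAt u u' t)
    (hm : HasDerivAt m m' t) (hm0 : m t ≠ 0) :
    deriv (fun τ => u τ / m τ) t = (u' - u t / m t * m') / m t := by
  rw [(hu.fun_div hm hm0).deriv]
  field_simp

noncomputable def heatOp (u : ℝ → ℝ → ℝ) (t x : ℝ) : ℝ :=
  deriv (fun τ => u τ x) t - deriv (deriv (fun y => u t y)) x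

section heatOp

variable {u v : ℝ → ℝ → ℝ} {t x : ℝ}

theorem heatOp_add (hut : DifferentiableAt ℝ (fun τ => u τ x) t)
    (hvt : DifferentiableAt ℝ (fun τ => v τ x) t)
    (hux : ContDiff ℝ 2 (fun y => u t y)) (hvx : ContDiff ℝ 2 (fun y => v t y)) :
    heatOp (fun τ y => u τ y + v τ y) t x = heatOp u t x + heatOp v t x := by
  unfold heatOp
  rw [deriv_fun_add hut hvt, ← Pi.add_def, deriv_deriv_add_of_contDiff hux hvx]
  ring

theorem heatOp_div_sub_drift (hut : DifferentiableAt ℝ (fun τ => u τ x) t)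
    (hvt : DifferentiableAt ℝ (fun τ => v τ x) t)
    (hux : ContDiff ℝ 2 (fun y => u t y)) (hvx : ContDiff ℝ 2 (fun y => v t y))
    (hv0 : ∀ y, v t y ≠ 0) :
    heatOp (fun τ y => u τ y / v τ y) t x
        - 2 * (deriv (fun y => v t y) x / v t x) * deriv (fun y => u t y / v t y) x
      = (heatOp u t x - u t x / v t x * heatOp v t x) / v t x := by
  have hx := deriv_deriv_div_add_drift hux hvx hv0 x
  have ht := deriv_div_eq_of_hasDerivAt hut.hasDerivAt hvt.hasDerivAt (hv0 x)
  unfold heatOp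
  linear_combination ht - hx

end heatOp

theorem stmt15_general
    (s : ℝ)
    (B D : ℝ → ℝ)
    (nD nO : ℝ → ℝ → ℝ)
    (hDpos : ∀ t > (0 : ℝ), ∀ x, 0 < nD t x)
    (hOpos : ∀ t > (0 : ℝ), ∀ x, 0 < nO t x)
    (hDt : ∀ x : ℝ, ContDiffOn ℝ 1 (fun t => nD t x) (Set.Ioi 0))
    (hOt : ∀ x : ℝ, ContDiffOn ℝ 1 (fun t => nO t x) (Set.Ioi 0))
    (hDx : ∀ t > (0 : ℝ), ContDiff ℝ 2 (fun x => nD t x))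
    (hOx : ∀ t > (0 : ℝ), ContDiff ℝ 2 (fun x => nO t x))
    (heqD : ∀ t > (0 : ℝ), ∀ x,
      deriv (fun τ => nD τ x) t - deriv (deriv (fun y => nD t y)) x
        = nD t x * ((1 - s) * (1 + nO t x / (nD t x + nO t x))
            * B (nD t x + nO t x) - D (nD t x + nO t x)))
    (heqO : ∀ t > (0 : ℝ), ∀ x,
      deriv (fun τ => nO τ x) t - deriv (deriv (fun y => nO t y)) x
        = nO t x * ((nO t x / (nD t x + nO t x))
            * B (nD t x + nO t x) - D (nD t x + nO t x)))
    (n p : ℝ → ℝ → ℝ)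
    (hn : ∀ t x, n t x = nD t x + nO t x)
    (hp : ∀ t x, p t x = nD t x / n t x) :
    (∀ t > (0 : ℝ), ∀ x,
      deriv (fun τ => p τ x) t - deriv (deriv (fun y => p t y)) x
          - 2 * (deriv (fun y => n t y) x / n t x) * deriv (fun y => p t y) x
        = B (n t x) * p t x * (1 - p t x) * (s * p t x - (2 * s - 1))) ∧
    (∀ t > (0 : ℝ), ∀ x,
      deriv (fun τ => n τ x) t - deriv (deriv (fun y => n t y)) x
        = n t x * ((1 - s + s * (1 - p t x) ^ 2) * B (n t x) - D (n t x))) := by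
  have hn_fun : n = fun τ y => nD τ y + nO τ y := funext₂ hn
  obtain rfl : p = fun τ y => nD τ y / n τ y := funext₂ hp
  have hDt' : ∀ t > (0 : ℝ), ∀ x, DifferentiableAt ℝ (fun τ => nD τ x) t := fun t ht x =>
    ((hDt x).contDiffAt (Ioi_mem_nhds ht)).differentiableAt one_ne_zero
  have hOt' : ∀ t > (0 : ℝ), ∀ x, DifferentiableAt ℝ (fun τ => nO τ x) t := fun t ht x =>
    ((hOt x).contDiffAt (Ioi_mem_nhds ht)).differentiableAt one_ne_zero
  have hnt : ∀ t > (0 : ℝ), ∀ x, DifferentiableAt ℝ (fun τ => n τ x) t := fun t ht x => by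
    rw [hn_fun]; exact (hDt' t ht x).fun_add (hOt' t ht x)
  have hnx : ∀ t > (0 : ℝ), ContDiff ℝ 2 (fun x => n t x) := fun t ht => by
    rw [hn_fun]; exact (hDx t ht).add (hOx t ht)
  have hsum_ne : ∀ t > (0 : ℝ), ∀ x, nD t x + nO t x ≠ 0 := fun t ht x =>
    (add_pos (hDpos t ht x) (hOpos t ht x)).ne'
  have hn_ne : ∀ t > (0 : ℝ), ∀ x, n t x ≠ 0 := fun t ht x => hn t x ▸ hsum_ne t ht x
  have heq_n : ∀ t > (0 : ℝ), ∀ x, heatOp n t x = heatOp nD t x + heatOp nO t x :=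
    fun t ht x => hn_fun ▸ heatOp_add (hDt' t ht x) (hOt' t ht x) (hDx t ht) (hOx t ht)
  refine ⟨fun t ht x => ?_, fun t ht x => ?_⟩
  · change heatOp (fun τ y => nD τ y / n τ y) t x - _ = _
    rw [heatOp_div_sub_drift (hDt' t ht x) (hnt t ht x) (hDx t ht) (hnx t ht) (hn_ne t ht),
      heq_n t ht, heatOp, heatOp, heqD t ht, heqO t ht]
    simp only [hn]
    field_simp [hsum_ne t ht x]
    ring
  · change heatOp n t x = _
    rw [heq_n t ht, heatOp, heatOp, heqD t ht, heqO t ht]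
    simp only [hn]
    field_simp [hsum_ne t ht x]
    ring

/-- If `(n_D, n_O)` is a positive classical solution of the gene-drive
density system with birth rate `B` and death rate `D`, then the total density
`n = n_D + n_O` and the drive frequency `p = n_D / n` satisfy the frequency system
`∂_t p - ∂_xx p - 2 (∂_x n / n) ∂_x p = B(n) p (1-p) (s p - (2s-1))` and
`∂_t n - ∂_xx n = n ((1 - s + s(1-p)²) B(n) - D(n))` on `(0,∞) × ℝ`. -/
theorem stmt15
    (s : ℝ) (hs : s ∈ Set.Ico (0 : ℝ) 1)
    (B D : ℝ → ℝ) (hB : Continuous B) (hD : Continuous D)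
    (nD nO : ℝ → ℝ → ℝ)
    (hDpos : ∀ t > (0 : ℝ), ∀ x, 0 < nD t x)
    (hOpos : ∀ t > (0 : ℝ), ∀ x, 0 < nO t x)
    (hDt : ∀ x : ℝ, ContDiffOn ℝ 1 (fun t => nD t x) (Set.Ioi 0))
    (hOt : ∀ x : ℝ, ContDiffOn ℝ 1 (fun t => nO t x) (Set.Ioi 0))
    (hDx : ∀ t > (0 : ℝ), ContDiff ℝ 2 (fun x => nD t x))
    (hOx : ∀ t > (0 : ℝ), ContDiff ℝ 2 (fun x => nO t x))
    (heqD : ∀ t > (0 : ℝ), ∀ x,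
      deriv (fun τ => nD τ x) t - deriv (deriv (fun y => nD t y)) x
        = nD t x * ((1 - s) * (1 + nO t x / (nD t x + nO t x))
            * B (nD t x + nO t x) - D (nD t x + nO t x)))
    (heqO : ∀ t > (0 : ℝ), ∀ x,
      deriv (fun τ => nO τ x) t - deriv (deriv (fun y => nO t y)) x
        = nO t x * ((nO t x / (nD t x + nO t x))
            * B (nD t x + nO t x) - D (nD t x + nO t x)))
    (n p : ℝ → ℝ → ℝ)
    (hn : ∀ t x, n t x = nD t x + nO t x)
    (hp : ∀ t x, p t x = nD t x / n t x) :
    (∀ t > (0 : ℝ), ∀ x,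
      deriv (fun τ => p τ x) t - deriv (deriv (fun y => p t y)) x
          - 2 * (deriv (fun y => n t y) x / n t x) * deriv (fun y => p t y) x
        = B (n t x) * p t x * (1 - p t x) * (s * p t x - (2 * s - 1))) ∧
    (∀ t > (0 : ℝ), ∀ x,
      deriv (fun τ => n τ x) t - deriv (deriv (fun y => n t y)) x
        = n t x * ((1 - s + s * (1 - p t x) ^ 2) * B (n t x) - D (n t x))) :=
  stmt15_general s B D nD nO hDpos hOpos hDt hOt hDx hOx heqD heqO n p hn hp
end

section
/- Let s ∈ [0,1), r > 0, c ∈ ℝ, and let (P, N) be a traveling wave of the gene-drive frequency system with speed c such that N'(x) → 0 as x → ±∞ and the functions x ↦ N'(x)² and x ↦ N(x)·N'(x)·((1-s+s(1-P(x))²)·(r(1-N(x))+1) - 1) are Lebesgue integrable over ℝ. Then c·∫_ℝ N'(x)² dx = -∫_ℝ N(x)·N'(x)·((1 - s + s(1-P(x))²)·(r(1-N(x)) + 1) - 1) dx. -/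
/-! Multiplying the `N`-equation by `N'` turns `-N'' N'` into the exact derivative
`-(N'^2 / 2)'`, whose integral over `ℝ` vanishes because `N' → 0` at `±∞`. -/

open Filter Topology MeasureTheory

theorem integral_deriv_mul_self_eq_zero {g : ℝ → ℝ} (hg : Differentiable ℝ g)
    (hbot : Tendsto g atBot (𝓝 0)) (htop : Tendsto g atTop (𝓝 0))
    (hint : Integrable fun x => deriv g x * g x) :
    ∫ x, deriv g x * g x = 0 := by
  have hderiv : ∀ x, HasDerivAt (fun y => g y ^ 2 / 2) (deriv g x * g x) x := fun x =>
    (((hg x).hasDerivAt.pow 2).div_const 2).congr_deriv (by ring)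
  have hlim : ∀ l : Filter ℝ, Tendsto g l (𝓝 0) → Tendsto (fun y => g y ^ 2 / 2) l (𝓝 0) :=
    fun l h => by simpa using (h.pow 2).div_const 2
  rw [integral_of_hasDerivAt_of_tendsto hderiv hint (hlim _ hbot) (hlim _ htop), sub_self]

theorem stmt16_general
    (s r c : ℝ)
    (P N : ℝ → ℝ)
    (hN2 : ContDiff ℝ 2 N)
    (heqN : ∀ x, -deriv (deriv N) x - c * deriv N x
      = N x * ((1 - s + s * (1 - P x) ^ 2) * (r * (1 - N x) + 1) - 1))
    (hN'bot : Filter.Tendsto (fun x => deriv N x) Filter.atBot (nhds 0))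
    (hN'top : Filter.Tendsto (fun x => deriv N x) Filter.atTop (nhds 0))
    (hint1 : MeasureTheory.Integrable (fun x => (deriv N x) ^ 2))
    (hint2 : MeasureTheory.Integrable (fun x => N x * deriv N x
      * ((1 - s + s * (1 - P x) ^ 2) * (r * (1 - N x) + 1) - 1))) :
    c * ∫ x : ℝ, (deriv N x) ^ 2
      = -∫ x : ℝ, N x * deriv N x
          * ((1 - s + s * (1 - P x) ^ 2) * (r * (1 - N x) + 1) - 1) := by
  set F : ℝ → ℝ := fun x => N x * deriv N x
    * ((1 - s + s * (1 - P x) ^ 2) * (r * (1 - N x) + 1) - 1)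
  have hpointwise : (fun x => deriv (deriv N) x * deriv N x)
      = fun x => -c * deriv N x ^ 2 - F x := by
    funext x
    linear_combination (-deriv N x) * heqN x
  have hint : Integrable fun x => -c * deriv N x ^ 2 - F x := (hint1.const_mul (-c)).sub hint2
  have hzero := integral_deriv_mul_self_eq_zero hN2.differentiable_deriv_two hN'bot hN'top
    (hpointwise ▸ hint)
  rw [hpointwise, integral_sub (hint1.const_mul (-c)) hint2, integral_const_mul] at hzero
  linarith

/-- For a traveling wave `(P, N)` of the gene-drive frequency system
with `N' → 0` at `±∞` and suitable integrability, multiplying the `N`-equation by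
`N'` and integrating by parts over `ℝ` gives
`c ∫ N'² = -∫ N N' ((1 - s + s(1-P)²)(r(1-N)+1) - 1)`. -/
theorem stmt16
    (s r c : ℝ) (hs : s ∈ Set.Ico (0 : ℝ) 1) (hr : 0 < r)
    (P N : ℝ → ℝ)
    (hP2 : ContDiff ℝ 2 P) (hN2 : ContDiff ℝ 2 N)
    (hNpos : ∀ x, 0 < N x)
    (hPbd : Bornology.IsBounded (Set.range P))
    (hNbd : Bornology.IsBounded (Set.range N))
    (hPnn : ∀ x, 0 ≤ P x)
    (hPmono : Monotone P) (hNanti : StrictAnti N)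
    (hPlim : Filter.Tendsto P Filter.atBot (nhds 0))
    (hNlim : Filter.Tendsto N Filter.atBot (nhds 1))
    (heqP : ∀ x, -deriv (deriv P) x - c * deriv P x - 2 * (deriv N x / N x) * deriv P x
      = (r * (1 - N x) + 1) * P x * (1 - P x) * (s * P x - (2 * s - 1)))
    (heqN : ∀ x, -deriv (deriv N) x - c * deriv N x
      = N x * ((1 - s + s * (1 - P x) ^ 2) * (r * (1 - N x) + 1) - 1))
    (hN'bot : Filter.Tendsto (fun x => deriv N x) Filter.atBot (nhds 0))
    (hN'top : Filter.Tendsto (fun x => deriv N x) Filter.atTop (nhds 0))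
    (hint1 : MeasureTheory.Integrable (fun x => (deriv N x) ^ 2))
    (hint2 : MeasureTheory.Integrable (fun x => N x * deriv N x
      * ((1 - s + s * (1 - P x) ^ 2) * (r * (1 - N x) + 1) - 1))) :
    c * ∫ x : ℝ, (deriv N x) ^ 2
      = -∫ x : ℝ, N x * deriv N x
          * ((1 - s + s * (1 - P x) ^ 2) * (r * (1 - N x) + 1) - 1) :=
  stmt16_general s r c P N hN2 heqN hN'bot hN'top hint1 hint2
end
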